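/- arXiv:2001.09544 — 8 statements merged into one kernel-verified Lean document; each statement's English description precedes it below -/
import Mathlib

section
/- The function M ↦ q(M)/p(M) is strictly increasing on the interval (0,1). -/
open Real Set MeasureTheory

/-- `q(M) = (p(M)/M) ∫₀^M s^a / ((1-s)^b p(s)²) ds`. -/
noncomputable def qfun (p : ℝ → ℝ) (a b : ℝ) (M : ℝ) : ℝ :=
  p M / M * ∫ s in (0:ℝ)..M, s ^ a / ((1 - s) ^ b * p s ^ 2)

/-- The function `M ↦ q(M)/p(M)` is strictly increasing on `(0,1)`. -/
theorem qp_strictMonoOn (a b : ℝ) (ha : 1 ≤ a) (hb : 1 ≤ b)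
    (p : ℝ → ℝ) (hpc : ContinuousOn p (Icc 0 1))
    (hpa : AntitoneOn p (Icc 0 1)) (hp1 : p 1 = 0)
    (hppos : ∀ M ∈ Ico (0:ℝ) 1, 0 < p M) :
    StrictMonoOn (fun M => qfun p a b M / p M) (Ioo (0:ℝ) 1) := by
  have ha0 : (0:ℝ) < a := lt_of_lt_of_le one_pos ha
  have hb0 : (0:ℝ) ≤ b := le_trans one_pos.le hb
  set f : ℝ → ℝ := fun s => s ^ a / ((1 - s) ^ b * p s ^ 2) with hfdef
  -- continuity of f on [0, Y] for Y < 1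
  have fcont : ∀ Y ∈ Ico (0:ℝ) 1, ContinuousOn f (Icc 0 Y) := by
    intro Y hY
    have hsub : Icc (0:ℝ) Y ⊆ Ico 0 1 := fun s hs => ⟨hs.1, lt_of_le_of_lt hs.2 hY.2⟩
    have hsub' : Icc (0:ℝ) Y ⊆ Icc 0 1 := hsub.trans Ico_subset_Icc_self
    apply ContinuousOn.div
    · exact continuousOn_id.rpow_const (fun s hs => Or.inr ha0.le)
    · exact ContinuousOn.mul
        ((continuousOn_const.sub continuousOn_id).rpow_const (fun s hs => Or.inr hb0))
        ((hpc.mono hsub').pow 2)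
    · intro s hs
      have h1 : 0 < 1 - s := by have := (hsub hs).2; linarith
      have h2 : 0 < p s := hppos s (hsub hs)
      positivity
  intro x hx y hy hxy
  obtain ⟨hx0, hx1⟩ := hx
  obtain ⟨hy0, hy1⟩ := hy
  have hpx : 0 < p x := hppos x ⟨hx0.le, hx1⟩
  have hpy : 0 < p y := hppos y ⟨hy0.le, hy1⟩
  -- rewrite the goal as (∫₀^M f)/M
  have key : ∀ M : ℝ, M ∈ Ioo (0:ℝ) 1 → qfun p a b M / p M = (∫ s in (0:ℝ)..M, f s) / M := by
    intro M hM
    have hpM : p M ≠ 0 := (hppos M ⟨hM.1.le, hM.2⟩).ne'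
    have hM0 : M ≠ 0 := hM.1.ne'
    simp only [qfun, hfdef]
    field_simp
  simp only [key x ⟨hx0, hx1⟩, key y ⟨hy0, hy1⟩]
  rw [div_lt_div_iff₀ hx0 hy0]
  -- integrability
  have hIx : IntervalIntegrable f volume 0 x := by
    apply ContinuousOn.intervalIntegrable
    rw [uIcc_of_le hx0.le]
    exact fcont x ⟨hx0.le, hx1⟩
  have hIxy : IntervalIntegrable f volume x y := by
    apply ContinuousOn.intervalIntegrable
    rw [uIcc_of_le hxy.le]
    exact (fcont y ⟨hy0.le, hy1⟩).mono (Icc_subset_Icc hx0.le le_rfl)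
  have hsplit : (∫ s in (0:ℝ)..y, f s) = (∫ s in (0:ℝ)..x, f s) + ∫ s in x..y, f s :=
    (intervalIntegral.integral_add_adjacent_intervals hIx hIxy).symm
  set C : ℝ := (1 - x) ^ b * p x ^ 2 with hCdef
  have hC : 0 < C := by
    have h1 : 0 < 1 - x := by linarith
    positivity
  -- rpow integrand integrability
  have hrc : ∀ u v : ℝ, IntervalIntegrable (fun s : ℝ => s ^ a / C) volume u v := by
    intro u v
    apply ContinuousOn.intervalIntegrable
    exact (ContinuousOn.rpow_const continuousOn_id (fun s hs => Or.inr ha0.le)).div_const C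
  -- pointwise comparison on [0,x]
  have hA : (∫ s in (0:ℝ)..x, f s) ≤ (∫ s in (0:ℝ)..x, s ^ a) / C := by
    rw [← intervalIntegral.integral_div]
    apply intervalIntegral.integral_mono_on hx0.le hIx (hrc 0 x)
    intro s hs
    have hs1 : 1 - x ≤ 1 - s := by linarith [hs.2]
    have h1x : (0:ℝ) ≤ 1 - x := by linarith
    have hpow : (1 - x) ^ b ≤ (1 - s) ^ b := Real.rpow_le_rpow h1x hs1 hb0
    have hps : p x ≤ p s := hpa ⟨hs.1, by linarith [hs.2]⟩ ⟨hx0.le, hx1.le⟩ hs.2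
    have hps2 : p x ^ 2 ≤ p s ^ 2 := by nlinarith
    have h1s : (0:ℝ) ≤ 1 - s := by linarith [hs.2]
    have hCD : C ≤ (1 - s) ^ b * p s ^ 2 := by
      calc C = (1 - x) ^ b * p x ^ 2 := rfl
        _ ≤ (1 - s) ^ b * p s ^ 2 :=
            mul_le_mul hpow hps2 (by positivity) (Real.rpow_nonneg h1s b)
    have hsa : (0:ℝ) ≤ s ^ a := Real.rpow_nonneg hs.1 a
    exact div_le_div_of_nonneg_left hsa hC hCD
  -- pointwise comparison on [x,y]
  have hB : (∫ s in x..y, s ^ a) / C ≤ ∫ s in x..y, f s := by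
    rw [← intervalIntegral.integral_div]
    apply intervalIntegral.integral_mono_on hxy.le (hrc x y) hIxy
    intro s hs
    have hs0 : 0 ≤ s := le_trans hx0.le hs.1
    have hs1' : s < 1 := lt_of_le_of_lt hs.2 hy1
    have h1s : (0:ℝ) ≤ 1 - s := by linarith
    have hpow : (1 - s) ^ b ≤ (1 - x) ^ b := Real.rpow_le_rpow h1s (by linarith [hs.1]) hb0
    have hps : p s ≤ p x := hpa ⟨hx0.le, hx1.le⟩ ⟨hs0, hs1'.le⟩ hs.1
    have hpspos : 0 < p s := hppos s ⟨hs0, hs1'⟩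
    have hps2 : p s ^ 2 ≤ p x ^ 2 := by nlinarith
    have hDC : (1 - s) ^ b * p s ^ 2 ≤ C := by
      calc (1 - s) ^ b * p s ^ 2 ≤ (1 - x) ^ b * p x ^ 2 :=
            mul_le_mul hpow hps2 (by positivity) (Real.rpow_nonneg (by linarith) b)
        _ = C := rfl
    have hsa : (0:ℝ) ≤ s ^ a := Real.rpow_nonneg hs0 a
    have hD : 0 < (1 - s) ^ b * p s ^ 2 := by
      have : 0 < 1 - s := by linarith
      positivity
    exact div_le_div_of_nonneg_left hsa hD hDC
  -- compute the power integrals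
  have ha1 : (-1:ℝ) < a := by linarith
  have hrint1 : (∫ s in (0:ℝ)..x, s ^ a) = x ^ (a + 1) / (a + 1) := by
    rw [integral_rpow (Or.inl ha1), Real.zero_rpow (by linarith), sub_zero]
  have hrint2 : (∫ s in x..y, s ^ a) = (y ^ (a + 1) - x ^ (a + 1)) / (a + 1) := by
    rw [integral_rpow (Or.inl ha1)]
  -- strict power inequality
  have hxa : x ^ a < y ^ a := Real.rpow_lt_rpow hx0.le hxy ha0
  have hxa1 : x ^ (a + 1) = x ^ a * x := by rw [Real.rpow_add_one hx0.ne']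
  have hya1 : y ^ (a + 1) = y ^ a * y := by rw [Real.rpow_add_one hy0.ne']
  have hxapos : 0 < x ^ a := Real.rpow_pos_of_pos hx0 a
  have hstrict : (∫ s in (0:ℝ)..x, s ^ a) / C * (y - x) < (∫ s in x..y, s ^ a) / C * x := by
    rw [hrint1, hrint2]
    rw [div_div, div_div, div_mul_eq_mul_div, div_mul_eq_mul_div,
      div_lt_div_iff₀ (by positivity) (by positivity)]
    rw [hxa1, hya1]
    nlinarith [mul_pos (mul_pos (mul_pos (mul_pos hx0 hy0) (sub_pos.mpr hxa))
      (show (0:ℝ) < a + 1 by linarith)) hC]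
  have h1 : (∫ s in (0:ℝ)..x, f s) * (y - x) ≤ (∫ s in (0:ℝ)..x, s ^ a) / C * (y - x) :=
    mul_le_mul_of_nonneg_right hA (by linarith)
  have h2 : (∫ s in x..y, s ^ a) / C * x ≤ (∫ s in x..y, f s) * x :=
    mul_le_mul_of_nonneg_right hB hx0.le
  rw [hsplit]
  nlinarith
end

section
/- The function M ↦ M·q(M)/p(M), which equals ∫₀^M s^a/((1−s)^b p(s)²) ds, is a continuous, strictly increasing bijection from (0,1) onto (0,∞). -/
open Real Set MeasureTheory Filter Topology

section Primitive

variable {f : ℝ → ℝ} {u v : ℝ}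

lemma ContinuousOn.intervalIntegrable_of_mem_Ico (hf : ContinuousOn f (Ico u v)) {x y : ℝ}
    (hx : x ∈ Ico u v) (hy : y ∈ Ico u v) : IntervalIntegrable f volume x y :=
  (hf.mono (ordConnected_Ico.uIcc_subset hx hy)).intervalIntegrable

lemma continuousOn_primitive_Ico (hf : ContinuousOn f (Ico u v)) :
    ContinuousOn (fun x => ∫ s in u..x, f s) (Ico u v) := by
  intro x hx
  obtain ⟨m, hxm, hmv⟩ := exists_between hx.2
  have hum : u ≤ m := hx.1.trans hxm.le
  have hprim : ContinuousOn (fun x => ∫ s in u..x, f s) (Icc u m) := by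
    have hint : IntegrableOn f (uIcc u m) volume := by
      rw [uIcc_of_le hum]
      exact (hf.mono (Icc_subset_Ico_right hmv)).integrableOn_Icc
    simpa only [uIcc_of_le hum] using intervalIntegral.continuousOn_primitive_interval hint
  refine (hprim x ⟨hx.1, hxm.le⟩).mono_of_mem_nhdsWithin ?_
  filter_upwards [self_mem_nhdsWithin, nhdsWithin_le_nhds (Iio_mem_nhds hxm)] with y hy hym
  exact ⟨hy.1, le_of_lt hym⟩

lemma strictMonoOn_primitive_Ico (hf : ContinuousOn f (Ico u v))
    (hpos : ∀ s ∈ Ioo u v, 0 < f s) : StrictMonoOn (fun x => ∫ s in u..x, f s) (Ico u v) := by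
  intro x hx y hy hxy
  have hu : u ∈ Ico u v := ⟨le_rfl, hx.1.trans_lt hx.2⟩
  have hdiff := intervalIntegral.integral_interval_sub_left
    (hf.intervalIntegrable_of_mem_Ico hu hy) (hf.intervalIntegrable_of_mem_Ico hu hx)
  have hxy_pos : 0 < ∫ s in x..y, f s :=
    intervalIntegral.intervalIntegral_pos_of_pos_on (hf.intervalIntegrable_of_mem_Ico hx hy)
      (fun s hs => hpos s ⟨hx.1.trans_lt hs.1, hs.2.trans hy.2⟩) hxy
  simp only
  linarith

lemma bijOn_primitive_Ioo_Ioi (huv : u < v) (hf : ContinuousOn f (Ico u v))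
    (hpos : ∀ s ∈ Ioo u v, 0 < f s) (htop : Tendsto (fun x => ∫ s in u..x, f s) (𝓝[<] v) atTop) :
    BijOn (fun x => ∫ s in u..x, f s) (Ioo u v) (Ioi 0) := by
  have huI : u ∈ Ico u v := ⟨le_rfl, huv⟩
  have hmono := strictMonoOn_primitive_Ico hf hpos
  have hcont := continuousOn_primitive_Ico hf
  have hbot : Tendsto (fun x => ∫ s in u..x, f s) (𝓝[Ioo u v] u) (𝓝 0) := by
    simpa using (hcont u huI).tendsto.mono_left (nhdsWithin_mono _ Ioo_subset_Ico_self)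
  have := left_nhdsWithin_Ioo_neBot huv
  have := right_nhdsWithin_Ioo_neBot huv
  refine ⟨fun x hx => ?_, (hmono.mono Ioo_subset_Ico_self).injOn,
    isPreconnected_Ioo.intermediate_value_Ioi (l₁ := 𝓝[Ioo u v] u) (l₂ := 𝓝[Ioo u v] v)
      inf_le_right inf_le_right (hcont.mono Ioo_subset_Ico_self) hbot
      (htop.mono_left (nhdsWithin_mono _ Ioo_subset_Iio_self))⟩
  simpa using hmono huI (Ioo_subset_Ico_self hx) hx.1

end Primitive

lemma tendsto_one_sub_nhdsLT_one : Tendsto (fun x : ℝ => 1 - x) (𝓝[<] 1) (𝓝[>] 0) := by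
  refine tendsto_nhdsWithin_of_tendsto_nhds_of_eventually_within _ ?_ ?_
  · exact ((continuous_sub_left (1 : ℝ)).tendsto' 1 0 (sub_self 1)).mono_left nhdsWithin_le_nhds
  · filter_upwards [self_mem_nhdsWithin] with x (hx : x < 1)
    exact sub_pos.2 hx

lemma integral_div_one_sub {c m x : ℝ} (hx : x < 1) (hm : m < 1) :
    ∫ s in m..x, c / (1 - s) = c * (log (1 - m) - log (1 - x)) := by
  simp only [div_eq_mul_inv c, intervalIntegral.integral_const_mul,
    intervalIntegral.integral_comp_sub_left (fun s => s⁻¹) 1]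
  rw [integral_inv_of_pos (sub_pos.2 hx) (sub_pos.2 hm),
    log_div (sub_pos.2 hm).ne' (sub_pos.2 hx).ne']

lemma tendsto_integral_atTop_of_div_one_sub_le {f : ℝ → ℝ} {u m c : ℝ} (hum : u ≤ m) (hm : m < 1)
    (hc : 0 < c) (hf : ContinuousOn f (Ico u 1)) (hle : ∀ s ∈ Ico m 1, c / (1 - s) ≤ f s) :
    Tendsto (fun x => ∫ s in u..x, f s) (𝓝[<] 1) atTop := by
  have hlog : Tendsto (fun x => (∫ s in u..m, f s) + c * (log (1 - m) - log (1 - x)))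
      (𝓝[<] 1) atTop := by
    simp only [sub_eq_add_neg (log (1 - m))]
    exact tendsto_atTop_add_const_left _ _ ((tendsto_atTop_add_const_left _ _
      (tendsto_neg_atBot_atTop.comp (tendsto_log_nhdsGT_zero.comp
        tendsto_one_sub_nhdsLT_one))).const_mul_atTop hc)
  refine tendsto_atTop_mono' _ ?_ hlog
  filter_upwards [Ioo_mem_nhdsLT hm] with x hx
  have huI : u ∈ Ico u 1 := ⟨le_rfl, hum.trans_lt hm⟩
  have hmI : m ∈ Ico u 1 := ⟨hum, hm⟩
  have hxI : x ∈ Ico u 1 := ⟨hum.trans hx.1.le, hx.2⟩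
  rw [← integral_div_one_sub hx.2 hm, ← intervalIntegral.integral_add_adjacent_intervals
    (hf.intervalIntegrable_of_mem_Ico huI hmI) (hf.intervalIntegrable_of_mem_Ico hmI hxI)]
  gcongr
  refine intervalIntegral.integral_mono_on hx.1.le ?_ (hf.intervalIntegrable_of_mem_Ico hmI hxI)
    fun s hs => hle s ⟨hs.1, hs.2.trans_lt hx.2⟩
  exact (continuousOn_const.div (continuousOn_const.sub continuousOn_id)
    fun s hs => (sub_pos.2 hs.2).ne').intervalIntegrable_of_mem_Ico hmI hxI

section Integrand

variable {p : ℝ → ℝ} {a b : ℝ}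

lemma continuousOn_integrand (ha : 0 ≤ a) (hpc : ContinuousOn p (Icc 0 1))
    (hppos : ∀ M ∈ Ico (0:ℝ) 1, 0 < p M) :
    ContinuousOn (fun s => s ^ a / ((1 - s) ^ b * p s ^ 2)) (Ico 0 1) := by
  refine (continuousOn_id.rpow_const fun _ _ => Or.inr ha).div
    (((continuousOn_const.sub continuousOn_id).rpow_const fun s hs => Or.inl ?_).mul
      ((hpc.mono Ico_subset_Icc_self).pow 2)) fun s hs => ?_
  · exact (sub_pos.2 hs.2).ne'
  · have := sub_pos.2 hs.2
    have := hppos s hs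
    positivity

lemma integrand_pos (hppos : ∀ M ∈ Ico (0:ℝ) 1, 0 < p M) {s : ℝ} (hs : s ∈ Ioo (0:ℝ) 1) :
    0 < s ^ a / ((1 - s) ^ b * p s ^ 2) := by
  have := hs.1
  have := sub_pos.2 hs.2
  have := hppos s ⟨hs.1.le, hs.2⟩
  positivity

lemma exists_div_one_sub_le_integrand (ha : 0 ≤ a) (hb : 1 ≤ b) (hpc : ContinuousOn p (Icc 0 1))
    (hppos : ∀ M ∈ Ico (0:ℝ) 1, 0 < p M) :
    ∃ c > 0, ∀ s ∈ Ico (1/2 : ℝ) 1, c / (1 - s) ≤ s ^ a / ((1 - s) ^ b * p s ^ 2) := by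
  obtain ⟨t, -, hmax⟩ := isCompact_Icc.exists_isMaxOn (nonempty_Icc.2 zero_le_one) hpc
  have hP : 0 < p t := (hppos 0 ⟨le_rfl, one_pos⟩).trans_le (hmax ⟨le_rfl, zero_le_one⟩)
  refine ⟨(1/2) ^ a / p t ^ 2, by positivity, fun s hs => ?_⟩
  have hs0 : 0 < s := lt_of_lt_of_le (by norm_num) hs.1
  have h1s : 0 < 1 - s := sub_pos.2 hs.2
  have hps : 0 < p s := hppos s ⟨hs0.le, hs.2⟩
  have hnum : (1/2 : ℝ) ^ a ≤ s ^ a := rpow_le_rpow (by norm_num) hs.1 ha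
  have hpow : (1 - s) ^ b ≤ 1 - s := by
    simpa using rpow_le_rpow_of_exponent_ge h1s (by linarith [hs.1]) hb
  have hsq : p s ^ 2 ≤ p t ^ 2 := pow_le_pow_left₀ hps.le (hmax ⟨hs0.le, hs.2.le⟩) 2
  calc (1/2) ^ a / p t ^ 2 / (1 - s) = (1/2) ^ a / ((1 - s) * p t ^ 2) := by
        rw [div_div, mul_comm]
    _ ≤ s ^ a / ((1 - s) ^ b * p s ^ 2) :=
        div_le_div₀ (by positivity) hnum (by positivity) (mul_le_mul hpow hsq (by positivity) h1s.le)

end Integrand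

theorem Mqp_bijection_general (a b : ℝ) (ha : 1 ≤ a) (hb : 1 ≤ b)
    (p : ℝ → ℝ) (hpc : ContinuousOn p (Icc 0 1))
    (hppos : ∀ M ∈ Ico (0:ℝ) 1, 0 < p M) :
    (∀ M ∈ Ioo (0:ℝ) 1,
        M * qfun p a b M / p M = ∫ s in (0:ℝ)..M, s ^ a / ((1 - s) ^ b * p s ^ 2)) ∧
    ContinuousOn (fun M => M * qfun p a b M / p M) (Ioo (0:ℝ) 1) ∧
    StrictMonoOn (fun M => M * qfun p a b M / p M) (Ioo (0:ℝ) 1) ∧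
    Set.BijOn (fun M => M * qfun p a b M / p M) (Ioo (0:ℝ) 1) (Ioi (0:ℝ)) := by
  set F := fun M => ∫ s in (0:ℝ)..M, s ^ a / ((1 - s) ^ b * p s ^ 2)
  have hEq : EqOn (fun M => M * qfun p a b M / p M) F (Ioo 0 1) := fun M hM => by
    have := (hppos M ⟨hM.1.le, hM.2⟩).ne'
    simp only [qfun, F]
    field_simp [hM.1.ne']
  have hf := continuousOn_integrand (b := b) (zero_le_one.trans ha) hpc hppos
  have hmono := strictMonoOn_primitive_Ico hf fun s hs => integrand_pos hppos hs
  obtain ⟨c, hc, hle⟩ := exists_div_one_sub_le_integrand (zero_le_one.trans ha) hb hpc hppos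
  have hbij := bijOn_primitive_Ioo_Ioi zero_lt_one hf (fun s hs => integrand_pos hppos hs)
    (tendsto_integral_atTop_of_div_one_sub_le (by norm_num) (by norm_num) hc hf hle)
  refine ⟨hEq, ((continuousOn_primitive_Ico hf).mono Ioo_subset_Ico_self).congr hEq,
    fun x hx y hy hxy => ?_, hbij.congr hEq.symm⟩
  rw [hEq hx, hEq hy]
  exact hmono (Ioo_subset_Ico_self hx) (Ioo_subset_Ico_self hy) hxy

/-- The function `M ↦ M q(M)/p(M)`, which equals `∫₀^M s^a/((1-s)^b p(s)²) ds`,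
is a continuous, strictly increasing bijection from `(0,1)` onto `(0,∞)`. -/
theorem Mqp_bijection (a b : ℝ) (ha : 1 ≤ a) (hb : 1 ≤ b)
    (p : ℝ → ℝ) (hpc : ContinuousOn p (Icc 0 1))
    (hpa : AntitoneOn p (Icc 0 1)) (hp1 : p 1 = 0)
    (hppos : ∀ M ∈ Ico (0:ℝ) 1, 0 < p M) :
    (∀ M ∈ Ioo (0:ℝ) 1,
        M * qfun p a b M / p M = ∫ s in (0:ℝ)..M, s ^ a / ((1 - s) ^ b * p s ^ 2)) ∧
    ContinuousOn (fun M => M * qfun p a b M / p M) (Ioo (0:ℝ) 1) ∧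
    StrictMonoOn (fun M => M * qfun p a b M / p M) (Ioo (0:ℝ) 1) ∧
    Set.BijOn (fun M => M * qfun p a b M / p M) (Ioo (0:ℝ) 1) (Ioi (0:ℝ)) :=
  Mqp_bijection_general a b ha hb p hpc hppos
end

section
/- For every w = (w₁,…,wₙ) ∈ ℝⁿ there exists a unique u ∈ 𝒪 such that wᵢ = log(uᵢ q(M)/p(M)) for every i = 1,…,n, where M = Σᵢ uᵢ. In particular, the map 𝒪 → ℝⁿ sending u to (log(uᵢ q(M)/p(M)))ᵢ is a bijection. -/
open Real Set MeasureTheory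

section EntropyAux

noncomputable def cfun (p : ℝ → ℝ) (a b s : ℝ) : ℝ := s ^ a / ((1 - s) ^ b * p s ^ 2)

noncomputable def Ffun (p : ℝ → ℝ) (a b M : ℝ) : ℝ := ∫ s in (0:ℝ)..M, cfun p a b s

variable {a b : ℝ} {p : ℝ → ℝ}

lemma cfun_contOn (ha : 1 ≤ a) (hpc : ContinuousOn p (Icc 0 1))
    (hppos : ∀ M ∈ Ico (0:ℝ) 1, 0 < p M) {T : ℝ} (hT : T < 1) :
    ContinuousOn (cfun p a b) (Icc 0 T) := by
  have hsub : Icc (0:ℝ) T ⊆ Icc 0 1 := Icc_subset_Icc_right hT.le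
  have hden : ∀ x ∈ Icc (0:ℝ) T, (1 - x) ^ b * p x ^ 2 ≠ 0 := by
    intro x hx
    have h1 : (0:ℝ) < 1 - x := by linarith [hx.2]
    have h2 : 0 < p x := hppos x ⟨hx.1, lt_of_le_of_lt hx.2 hT⟩
    positivity
  apply ContinuousOn.div
  · exact (Real.continuous_rpow_const (by linarith)).continuousOn
  · apply ContinuousOn.mul
    · apply ContinuousOn.rpow_const
      · exact (continuous_const.sub continuous_id).continuousOn
      · intro x hx
        have h1x : (0:ℝ) < 1 - x := by linarith [hx.2]
        exact Or.inl h1x.ne'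
    · exact ((hpc.mono hsub).pow 2)
  · exact hden

lemma cfun_intble (ha : 1 ≤ a) (hpc : ContinuousOn p (Icc 0 1))
    (hppos : ∀ M ∈ Ico (0:ℝ) 1, 0 < p M) {x y T : ℝ} (hx : 0 ≤ x) (hxy : x ≤ y)
    (hyT : y ≤ T) (hT : T < 1) :
    IntervalIntegrable (cfun p a b) volume x y := by
  apply ContinuousOn.intervalIntegrable
  apply (cfun_contOn ha hpc hppos hT).mono
  rw [uIcc_of_le hxy]
  exact Icc_subset_Icc hx hyT

lemma cfun_pos (ha : 1 ≤ a) (hppos : ∀ M ∈ Ico (0:ℝ) 1, 0 < p M)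
    {s : ℝ} (hs : s ∈ Ioo (0:ℝ) 1) : 0 < cfun p a b s := by
  have h1 : (0:ℝ) < 1 - s := by linarith [hs.2]
  have h2 : 0 < p s := hppos s ⟨hs.1.le, hs.2⟩
  have h3 : 0 < s ^ a := Real.rpow_pos_of_pos hs.1 a
  unfold cfun; positivity

lemma Ffun_pos (ha : 1 ≤ a) (hpc : ContinuousOn p (Icc 0 1))
    (hppos : ∀ M ∈ Ico (0:ℝ) 1, 0 < p M) {M : ℝ} (hM : M ∈ Ioo (0:ℝ) 1) :
    0 < Ffun p a b M := by
  apply intervalIntegral.intervalIntegral_pos_of_pos_on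
  · exact cfun_intble ha hpc hppos le_rfl hM.1.le le_rfl hM.2
  · intro s hs; exact cfun_pos ha hppos ⟨hs.1, hs.2.trans hM.2⟩
  · exact hM.1

lemma Ffun_strictMonoOn (ha : 1 ≤ a) (hpc : ContinuousOn p (Icc 0 1))
    (hppos : ∀ M ∈ Ico (0:ℝ) 1, 0 < p M) :
    StrictMonoOn (Ffun p a b) (Ico 0 1) := by
  intro x hx y hy hxy
  have hxi : IntervalIntegrable (cfun p a b) volume 0 x :=
    cfun_intble ha hpc hppos le_rfl hx.1 le_rfl hx.2
  have hyi : IntervalIntegrable (cfun p a b) volume x y :=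
    cfun_intble ha hpc hppos hx.1 hxy.le le_rfl hy.2
  have key : Ffun p a b x + ∫ s in x..y, cfun p a b s = Ffun p a b y :=
    intervalIntegral.integral_add_adjacent_intervals hxi hyi
  have hpos : 0 < ∫ s in x..y, cfun p a b s := by
    apply intervalIntegral.intervalIntegral_pos_of_pos_on hyi _ hxy
    intro s hs
    exact cfun_pos ha hppos ⟨lt_of_le_of_lt hx.1 hs.1, hs.2.trans hy.2⟩
  linarith

lemma Ffun_contOn (ha : 1 ≤ a) (hpc : ContinuousOn p (Icc 0 1))
    (hppos : ∀ M ∈ Ico (0:ℝ) 1, 0 < p M) {T : ℝ} (hT0 : 0 ≤ T) (hT : T < 1) :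
    ContinuousOn (Ffun p a b) (Icc 0 T) := by
  have h := intervalIntegral.continuousOn_primitive_interval
    (f := cfun p a b) (μ := volume) (a := 0) (b := T) ?_
  · rwa [uIcc_of_le hT0] at h
  · rw [uIcc_of_le hT0]
    exact (cfun_contOn ha hpc hppos hT).integrableOn_Icc

lemma Ffun_surj (ha : 1 ≤ a) (hb : 1 ≤ b) (hpc : ContinuousOn p (Icc 0 1))
    (hpa : AntitoneOn p (Icc 0 1))
    (hppos : ∀ M ∈ Ico (0:ℝ) 1, 0 < p M) {S : ℝ} (hS : 0 < S) :
    ∃ M ∈ Ioo (0:ℝ) 1, Ffun p a b M = S := by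
  have hp0 : 0 < p 0 := hppos 0 ⟨le_rfl, one_pos⟩
  have hhalf : (0:ℝ) < (2:ℝ)⁻¹ ^ a := Real.rpow_pos_of_pos (by norm_num) a
  set K : ℝ := (2:ℝ)⁻¹ ^ a / p 0 ^ 2 with hK
  have hKpos : 0 < K := by positivity
  set T : ℝ := 1 - 2⁻¹ * Real.exp (-(S / K)) with hTdef
  have hepos : 0 < Real.exp (-(S / K)) := Real.exp_pos _
  have helt1 : Real.exp (-(S / K)) < 1 := by
    rw [Real.exp_lt_one_iff]
    have : 0 < S / K := div_pos hS hKpos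
    linarith
  have hT1 : T < 1 := by rw [hTdef]; nlinarith
  have hhalfT : (2:ℝ)⁻¹ ≤ T := by rw [hTdef]; nlinarith
  have hT0 : (0:ℝ) ≤ T := le_trans (by norm_num) hhalfT
  have h1T : 0 < 1 - T := by linarith
  -- pointwise bound on [1/2, T]
  have hpoint : ∀ s ∈ Icc ((2:ℝ)⁻¹) T, K * (1 - s)⁻¹ ≤ cfun p a b s := by
    intro s hs
    have hs0 : (0:ℝ) ≤ s := le_trans (by norm_num) hs.1
    have hs1 : s < 1 := lt_of_le_of_lt hs.2 hT1
    have h1s : 0 < 1 - s := by linarith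
    have hps : 0 < p s := hppos s ⟨hs0, hs1⟩
    have hnum : (2:ℝ)⁻¹ ^ a ≤ s ^ a :=
      Real.rpow_le_rpow (by norm_num) hs.1 (by linarith)
    have hd1 : (1 - s) ^ b ≤ 1 - s := by
      have := Real.rpow_le_rpow_of_exponent_ge h1s (by linarith) hb
      rwa [Real.rpow_one] at this
    have hd2 : p s ^ 2 ≤ p 0 ^ 2 := by
      have hle : p s ≤ p 0 := hpa ⟨le_rfl, zero_le_one⟩ ⟨hs0, hs1.le⟩ hs0
      exact pow_le_pow_left₀ hps.le hle 2
    have hdpos : 0 < (1 - s) ^ b * p s ^ 2 := by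
      have := Real.rpow_pos_of_pos h1s b; positivity
    have hden : (1 - s) ^ b * p s ^ 2 ≤ (1 - s) * p 0 ^ 2 :=
      mul_le_mul hd1 hd2 (by positivity) h1s.le
    have hEq : K * (1 - s)⁻¹ = (2:ℝ)⁻¹ ^ a / ((1 - s) * p 0 ^ 2) := by
      rw [hK]; field_simp
    rw [hEq]
    exact div_le_div₀ (Real.rpow_nonneg hs0 a) hnum hdpos hden
  have hg_int : IntervalIntegrable (fun s => K * (1 - s)⁻¹) volume 2⁻¹ T := by
    apply ContinuousOn.intervalIntegrable
    apply ContinuousOn.mul continuousOn_const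
    apply ContinuousOn.inv₀ ((continuous_const.sub continuous_id).continuousOn)
    intro x hx
    rw [uIcc_of_le hhalfT] at hx
    have : x ≤ T := hx.2
    have : 0 < 1 - x := by linarith
    exact this.ne'
  have hc_int : IntervalIntegrable (cfun p a b) volume 2⁻¹ T :=
    cfun_intble ha hpc hppos (by norm_num) hhalfT le_rfl hT1
  have hmono := intervalIntegral.integral_mono_on hhalfT hg_int hc_int hpoint
  -- compute the lower integral
  have hcomp : (∫ s in (2:ℝ)⁻¹..T, K * (1 - s)⁻¹) = S := by
    rw [intervalIntegral.integral_const_mul]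
    have h1 : (∫ s in (2:ℝ)⁻¹..T, (1 - s)⁻¹)
        = ∫ x in (1 - T)..(1 - 2⁻¹), x⁻¹ := by
      simpa using intervalIntegral.integral_comp_sub_left (fun x : ℝ => x⁻¹) 1
        (a := (2:ℝ)⁻¹) (b := T)
    rw [h1, integral_inv]
    · have hT' : 1 - T = 2⁻¹ * Real.exp (-(S / K)) := by rw [hTdef]; ring
      have : (1 - (2:ℝ)⁻¹) / (1 - T) = Real.exp (S / K) := by
        rw [hT']
        rw [div_eq_iff (by positivity)]
        rw [mul_comm ((2:ℝ)⁻¹) (Real.exp (-(S/K))), ← mul_assoc, ← Real.exp_add]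
        norm_num
      rw [this, Real.log_exp]
      field_simp
    · intro h
      rw [uIcc_of_le (by linarith : 1 - T ≤ 1 - (2:ℝ)⁻¹)] at h
      have := h.1
      linarith
  -- F T ≥ S
  have hFT : S ≤ Ffun p a b T := by
    have hadd : Ffun p a b (2:ℝ)⁻¹ + (∫ s in (2:ℝ)⁻¹..T, cfun p a b s) = Ffun p a b T :=
      intervalIntegral.integral_add_adjacent_intervals
        (cfun_intble ha hpc hppos le_rfl (by norm_num) (by norm_num) one_half_lt_one) hc_int
    have hF2 : 0 ≤ Ffun p a b (2:ℝ)⁻¹ := by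
      apply intervalIntegral.integral_nonneg (by norm_num)
      intro s hs
      have h1s : (0:ℝ) < 1 - s := by
        have := hs.2; norm_num at this ⊢; linarith
      have hps : 0 < p s := hppos s ⟨hs.1, by linarith⟩
      have : 0 ≤ s ^ a := Real.rpow_nonneg hs.1 a
      unfold cfun; positivity
    rw [hcomp] at hmono
    linarith
  -- IVT
  have hcont : ContinuousOn (Ffun p a b) (Icc 0 T) := Ffun_contOn ha hpc hppos hT0 hT1
  have hF0 : Ffun p a b 0 = 0 := intervalIntegral.integral_same
  have hmem : S ∈ Icc (Ffun p a b 0) (Ffun p a b T) := by rw [hF0]; exact ⟨hS.le, hFT⟩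
  obtain ⟨M, hMmem, hFM⟩ := intermediate_value_Icc hT0 hcont hmem
  refine ⟨M, ⟨?_, lt_of_le_of_lt hMmem.2 hT1⟩, hFM⟩
  rcases eq_or_lt_of_le hMmem.1 with h | h
  · exfalso; rw [← h] at hFM; rw [← hFM] at hS; rw [hF0] at hS; exact lt_irrefl 0 hS
  · exact h

end EntropyAux

/-- For every `w ∈ ℝⁿ` there is a unique `u ∈ 𝒪` with
`wᵢ = log (uᵢ q(M)/p(M))` for all `i`, where `M = Σⱼ uⱼ`; in particular the map
`u ↦ (log (uᵢ q(M)/p(M)))ᵢ` is a bijection from `𝒪` onto `ℝⁿ`. -/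
theorem entropy_variables_bijective (a b : ℝ) (ha : 1 ≤ a) (hb : 1 ≤ b)
    (p : ℝ → ℝ) (hpc : ContinuousOn p (Icc 0 1))
    (hpa : AntitoneOn p (Icc 0 1)) (hp1 : p 1 = 0)
    (hppos : ∀ M ∈ Ico (0:ℝ) 1, 0 < p M)
    (n : ℕ) (hn : 1 ≤ n) :
    (∀ w : Fin n → ℝ, ∃! u : Fin n → ℝ,
        u ∈ {u : Fin n → ℝ | (∀ i, 0 < u i) ∧ ∑ i, u i < 1} ∧
        ∀ i, w i = Real.log (u i * qfun p a b (∑ j, u j) / p (∑ j, u j))) ∧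
    Set.BijOn (fun (u : Fin n → ℝ) (i : Fin n) =>
        Real.log (u i * qfun p a b (∑ j, u j) / p (∑ j, u j)))
      {u : Fin n → ℝ | (∀ i, 0 < u i) ∧ ∑ i, u i < 1} Set.univ := by
  have hne : (Finset.univ : Finset (Fin n)).Nonempty := ⟨⟨0, hn⟩, Finset.mem_univ _⟩
  have hqeq : ∀ M : ℝ, qfun p a b M = p M / M * Ffun p a b M := fun _ => rfl
  have hex : ∀ w : Fin n → ℝ, ∃! u : Fin n → ℝ,
      u ∈ {u : Fin n → ℝ | (∀ i, 0 < u i) ∧ ∑ i, u i < 1} ∧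
      ∀ i, w i = Real.log (u i * qfun p a b (∑ j, u j) / p (∑ j, u j)) := by
    intro w
    set S : ℝ := ∑ i, Real.exp (w i) with hSdef
    have hSpos : 0 < S := Finset.sum_pos (fun i _ => Real.exp_pos _) hne
    obtain ⟨M, hM, hFM⟩ := Ffun_surj ha hb hpc hpa hppos hSpos
    have hpM : 0 < p M := hppos M ⟨hM.1.le, hM.2⟩
    have hM0 : M ≠ 0 := hM.1.ne'
    have hpM0 : p M ≠ 0 := hpM.ne'
    have hS0 : S ≠ 0 := hSpos.ne'
    have hqM : 0 < qfun p a b M := by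
      rw [hqeq, hFM]; exact mul_pos (div_pos hpM hM.1) hSpos
    set u0 : Fin n → ℝ := fun i => Real.exp (w i) * (M / S) with hu0
    have hsum0 : ∑ j, u0 j = M := by
      rw [hu0]
      rw [← Finset.sum_mul, ← hSdef]
      field_simp
    have hu0pos : ∀ i, 0 < u0 i := fun i =>
      mul_pos (Real.exp_pos _) (div_pos hM.1 hSpos)
    have hkey0 : ∀ i, u0 i * qfun p a b M / p M = Real.exp (w i) := by
      intro i
      rw [hqeq, hFM, hu0]
      field_simp
    refine ⟨u0, ⟨⟨hu0pos, by rw [hsum0]; exact hM.2⟩, ?_⟩, ?_⟩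
    · intro i
      rw [hsum0, hkey0 i, Real.log_exp]
    · rintro u ⟨⟨hupos, husum⟩, heq⟩
      set N : ℝ := ∑ j, u j with hNdef
      have hN0 : 0 < N := Finset.sum_pos (fun i _ => hupos i) hne
      have hN1 : N < 1 := husum
      have hpN : 0 < p N := hppos N ⟨hN0.le, hN1⟩
      have hFN : 0 < Ffun p a b N := Ffun_pos ha hpc hppos ⟨hN0, hN1⟩
      have hqN : 0 < qfun p a b N := by
        rw [hqeq]; exact mul_pos (div_pos hpN hN0) hFN
      have hexp : ∀ i, Real.exp (w i) = u i * qfun p a b N / p N := by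
        intro i
        rw [heq i, Real.exp_log]
        exact div_pos (mul_pos (hupos i) hqN) hpN
      have hSN : S = Ffun p a b N := by
        rw [hSdef]
        calc (∑ i, Real.exp (w i)) = ∑ i, u i * (qfun p a b N / p N) := by
              refine Finset.sum_congr rfl fun i _ => ?_
              rw [hexp i, mul_div_assoc]
          _ = N * (qfun p a b N / p N) := by rw [← Finset.sum_mul, ← hNdef]
          _ = Ffun p a b N := by
              rw [hqeq]; field_simp
      have hNM : N = M := by
        apply (Ffun_strictMonoOn ha hpc hppos).injOn ⟨hN0.le, hN1⟩ ⟨hM.1.le, hM.2⟩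
        rw [← hSN, hFM]
      funext i
      have h1 : u i * (qfun p a b M / p M) = Real.exp (w i) := by
        rw [← hNM, ← mul_div_assoc]; exact (hexp i).symm
      have h2 : u0 i * (qfun p a b M / p M) = Real.exp (w i) := by
        rw [← mul_div_assoc]; exact hkey0 i
      have hne' : qfun p a b M / p M ≠ 0 := (div_pos hqM hpM).ne'
      exact mul_right_cancel₀ hne' (h1.trans h2.symm)
  refine ⟨hex, fun u _ => mem_univ _, ?_, ?_⟩
  · intro u hu v hv h
    exact ExistsUnique.unique
      (hex (fun i => Real.log (u i * qfun p a b (∑ j, u j) / p (∑ j, u j))))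
      ⟨hu, fun _ => rfl⟩ ⟨hv, fun i => congrFun h i⟩
  · intro w _
    obtain ⟨u, ⟨hu, heq⟩, -⟩ := hex w
    exact ⟨u, hu, funext fun i => (heq i).symm⟩
end

section
/- The entropy density h is a convex function on the convex set 𝒪. -/
open Real Set MeasureTheory

/-- Entropy density `h(u) = Σᵢ (uᵢ(log uᵢ − 1) + 1) + ∫₀^M log(q(s)/p(s)) ds`,
`M = Σᵢ uᵢ`. -/
noncomputable def hent (p : ℝ → ℝ) (a b : ℝ) {n : ℕ} (u : Fin n → ℝ) : ℝ :=
  (∑ i, (u i * (Real.log (u i) - 1) + 1)) +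
    ∫ s in (0:ℝ)..(∑ i, u i), Real.log (qfun p a b s / p s)

/-!
Write `f(s) = s^a / ((1-s)^b p(s)^2)`. Then `q(s)/p(s) = (1/s) ∫₀^s f = ∫₀^1 f(st) dt` is an
average of `f`, and `f` is nondecreasing on `[0,1)` because `p` is positive and nonincreasing. Hence
`log (q/p)` is nondecreasing on `(0,1)` and its primitive `M ↦ ∫₀^M log (q/p)` is convex. The bound
`f(s) ≥ s^a / p(0)^2` keeps `log (q/p)` above `a log s - const`, which makes it integrable at `0`.
Composing with the linear map `u ↦ ∑ uᵢ` and adding the coordinatewise convex terms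
`uᵢ log uᵢ - uᵢ + 1` gives the convexity of `h`.
-/

open intervalIntegral

theorem MonotoneOn.intervalIntegrable_Ico {f : ℝ → ℝ} {r x : ℝ} (hf : MonotoneOn f (Ico 0 r))
    (hx : x ∈ Ico 0 r) : IntervalIntegrable f volume 0 x :=
  (hf.mono (by rw [uIcc_of_le hx.1]; exact Icc_subset_Ico_right hx.2)).intervalIntegrable

theorem integral_div_eq_integral_comp_mul (f : ℝ → ℝ) {x : ℝ} (hx : x ≠ 0) :
    (∫ t in (0:ℝ)..x, f t) / x = ∫ t in (0:ℝ)..1, f (x * t) := by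
  rw [integral_comp_mul_left _ hx, mul_zero, mul_one, smul_eq_mul, div_eq_inv_mul]

theorem MonotoneOn.monotoneOn_integral_div {f : ℝ → ℝ} {r : ℝ} (hf : MonotoneOn f (Ico 0 r)) :
    MonotoneOn (fun x => (∫ t in (0:ℝ)..x, f t) / x) (Ioo 0 r) := by
  intro x hx y hy hxy
  have hmem : ∀ {z}, z ∈ Ioo 0 r → ∀ t ∈ Icc (0:ℝ) 1, z * t ∈ Ico 0 r := fun hz t ht =>
    ⟨mul_nonneg hz.1.le ht.1, (mul_le_of_le_one_right hz.1.le ht.2).trans_lt hz.2⟩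
  have hint : ∀ {z}, z ∈ Ioo 0 r → IntervalIntegrable (fun t => f (z * t)) volume 0 1 :=
    fun hz => MonotoneOn.intervalIntegrable (by
      rw [uIcc_of_le zero_le_one]
      exact fun s hs t ht hst => hf (hmem hz s hs) (hmem hz t ht) (by gcongr; exact hz.1.le))
  dsimp only
  rw [integral_div_eq_integral_comp_mul f hx.1.ne', integral_div_eq_integral_comp_mul f hy.1.ne']
  exact integral_mono_on zero_le_one (hint hx) (hint hy) fun t ht =>
    hf (hmem hx t ht) (hmem hy t ht) (mul_le_mul_of_nonneg_right hxy ht.1)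

theorem MonotoneOn.intervalIntegrable_of_le {g l : ℝ → ℝ} {a b : ℝ} (hab : a ≤ b)
    (hg : MonotoneOn g (Ioc a b)) (hl : IntervalIntegrable l volume a b)
    (hlg : ∀ x ∈ Ioc a b, l x ≤ g x) : IntervalIntegrable g volume a b := by
  refine (hl.norm.add (intervalIntegrable_const (c := ‖g b‖))).mono_fun' ?_ ?_ <;>
    rw [uIoc_of_le hab]
  · exact (aemeasurable_restrict_of_monotoneOn measurableSet_Ioc hg).aestronglyMeasurable
  filter_upwards [ae_restrict_mem measurableSet_Ioc] with x hx
  have hb : b ∈ Ioc a b := ⟨hx.1.trans_le hx.2, le_rfl⟩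
  exact (abs_le_max_abs_abs (hlg x hx) (hg hx hb hx.2)).trans
    (max_le_add_of_nonneg (abs_nonneg _) (abs_nonneg _))

theorem Convex.convexOn_integral_of_monotoneOn {g : ℝ → ℝ} {s : Set ℝ} {c : ℝ} (hs : Convex ℝ s)
    (hg : MonotoneOn g s) (hint : ∀ x ∈ s, IntervalIntegrable g volume c x) :
    ConvexOn ℝ s (fun x => ∫ t in c..x, g t) := by
  refine convexOn_of_slope_mono_adjacent hs fun {x y z} hx hz hxy hyz => ?_
  have hsub : ∀ {u v}, u ∈ s → v ∈ s → Icc u v ⊆ s := fun hu hv => hs.ordConnected.out hu hv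
  have hy : y ∈ s := hsub hx hz ⟨hxy.le, hyz.le⟩
  have hxy_int := (hint x hx).symm.trans (hint y hy)
  have hyz_int := (hint y hy).symm.trans (hint z hz)
  rw [integral_interval_sub_left (hint y hy) (hint x hx),
    integral_interval_sub_left (hint z hz) (hint y hy),
    div_le_div_iff₀ (by linarith) (by linarith)]
  have left : ∫ t in x..y, g t ≤ (y - x) * g y := by
    simpa [mul_comm] using integral_mono_on hxy.le hxy_int
      intervalIntegrable_const fun t ht => hg (hsub hx hy ht) hy ht.2
  have right : (z - y) * g y ≤ ∫ t in y..z, g t := by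
    simpa [mul_comm] using integral_mono_on hyz.le intervalIntegrable_const
      hyz_int fun t ht => hg hy (hsub hy hz ht) ht.1
  nlinarith

theorem ConvexOn.sum_comp_apply {ι : Type*} [Fintype ι] {s : Set ℝ} {φ : ℝ → ℝ}
    (hφ : ConvexOn ℝ s φ) : ConvexOn ℝ (univ.pi fun _ : ι => s) (fun u => ∑ i, φ (u i)) := by
  refine ⟨convex_pi fun _ _ => hφ.1, fun u hu v hv α β hα hβ hαβ => ?_⟩
  simp only [Pi.add_apply, Pi.smul_apply, smul_eq_mul, Finset.mul_sum, ← Finset.sum_add_distrib]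
  exact Finset.sum_le_sum fun i _ => hφ.2 (hu i trivial) (hv i trivial) hα hβ hαβ

theorem convexOn_mul_log_sub_one_add_one :
    ConvexOn ℝ (Ici 0) (fun x : ℝ => x * (log x - 1) + 1) := by
  refine ((convexOn_mul_log.sub (concaveOn_id (convex_Ici 0))).add_const 1).congr fun x _ => ?_
  show x * log x - x + 1 = _
  ring

theorem isLinearMap_sum_apply (n : ℕ) : IsLinearMap ℝ (fun u : Fin n → ℝ => ∑ i, u i) :=
  ⟨fun _ _ => Finset.sum_add_distrib, fun _ _ => Finset.mul_sum _ _ _ |>.symm⟩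

noncomputable def qIntegrand (p : ℝ → ℝ) (a b : ℝ) (s : ℝ) : ℝ :=
  s ^ a / ((1 - s) ^ b * p s ^ 2)

section qIntegrand

variable {p : ℝ → ℝ} {a b : ℝ}

theorem qfun_div_eq {s : ℝ} (hs : s ≠ 0) (hps : p s ≠ 0) :
    qfun p a b s / p s = (∫ t in (0:ℝ)..s, qIntegrand p a b t) / s := by
  unfold qfun qIntegrand
  field_simp

theorem qIntegrand_pos (hppos : ∀ M ∈ Ico (0:ℝ) 1, 0 < p M) {s : ℝ} (hs : s ∈ Ioo 0 1) :
    0 < qIntegrand p a b s :=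
  div_pos (rpow_pos_of_pos hs.1 a)
    (mul_pos (rpow_pos_of_pos (by linarith [hs.2]) b) (pow_pos (hppos s ⟨hs.1.le, hs.2⟩) 2))

theorem qIntegrand_denom_pos_and_le (hb : 0 ≤ b) (hpa : AntitoneOn p (Icc 0 1))
    (hppos : ∀ M ∈ Ico (0:ℝ) 1, 0 < p M) {x y : ℝ} (hx : 0 ≤ x) (hy : y < 1) (hxy : x ≤ y) :
    0 < (1 - y) ^ b * p y ^ 2 ∧ (1 - y) ^ b * p y ^ 2 ≤ (1 - x) ^ b * p x ^ 2 := by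
  have hpy : 0 < p y := hppos y ⟨hx.trans hxy, hy⟩
  have hpxy : p y ≤ p x := hpa ⟨hx, by linarith⟩ ⟨hx.trans hxy, hy.le⟩ hxy
  refine ⟨by positivity, mul_le_mul (rpow_le_rpow (by linarith) (by linarith) hb) (by gcongr)
    (by positivity) (rpow_nonneg (by linarith) b)⟩

theorem qIntegrand_monotoneOn (ha : 0 ≤ a) (hb : 0 ≤ b) (hpa : AntitoneOn p (Icc 0 1))
    (hppos : ∀ M ∈ Ico (0:ℝ) 1, 0 < p M) : MonotoneOn (qIntegrand p a b) (Ico 0 1) := by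
  intro x hx y hy hxy
  obtain ⟨hpos, hle⟩ := qIntegrand_denom_pos_and_le hb hpa hppos hx.1 hy.2 hxy
  exact div_le_div₀ (rpow_nonneg (hx.1.trans hxy) a) (rpow_le_rpow hx.1 hxy ha) hpos hle

theorem rpow_div_le_qIntegrand (hb : 0 ≤ b) (hpa : AntitoneOn p (Icc 0 1))
    (hppos : ∀ M ∈ Ico (0:ℝ) 1, 0 < p M) {t : ℝ} (ht : t ∈ Ico 0 1) :
    t ^ a / p 0 ^ 2 ≤ qIntegrand p a b t := by
  obtain ⟨hpos, hle⟩ := qIntegrand_denom_pos_and_le hb hpa hppos le_rfl ht.2 ht.1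
  refine div_le_div_of_nonneg_left (rpow_nonneg ht.1 a) hpos (hle.trans_eq ?_)
  simp

theorem integral_qIntegrand_div_pos (hf : MonotoneOn (qIntegrand p a b) (Ico 0 1))
    (hppos : ∀ M ∈ Ico (0:ℝ) 1, 0 < p M) {s : ℝ} (hs : s ∈ Ioo 0 1) :
    0 < (∫ t in (0:ℝ)..s, qIntegrand p a b t) / s :=
  div_pos (intervalIntegral_pos_of_pos_on (hf.intervalIntegrable_Ico ⟨hs.1.le, hs.2⟩)
    (fun _ ht => qIntegrand_pos hppos ⟨ht.1, ht.2.trans hs.2⟩) hs.1) hs.1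

theorem rpow_div_le_integral_qIntegrand_div (ha : -1 < a) (hb : 0 ≤ b)
    (hpa : AntitoneOn p (Icc 0 1)) (hppos : ∀ M ∈ Ico (0:ℝ) 1, 0 < p M)
    (hf : MonotoneOn (qIntegrand p a b) (Ico 0 1)) {s : ℝ} (hs : s ∈ Ioo 0 1) :
    s ^ a / (p 0 ^ 2 * (a + 1)) ≤ (∫ t in (0:ℝ)..s, qIntegrand p a b t) / s := by
  have ha1 : 0 < a + 1 := by linarith
  have hs0 : s ≠ 0 := hs.1.ne'
  calc s ^ a / (p 0 ^ 2 * (a + 1)) = (∫ t in (0:ℝ)..s, t ^ a / p 0 ^ 2) / s := by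
        rw [intervalIntegral.integral_div, integral_rpow (Or.inl ha), zero_rpow ha1.ne',
          rpow_add_one hs0, sub_zero]
        field_simp
    _ ≤ (∫ t in (0:ℝ)..s, qIntegrand p a b t) / s :=
      div_le_div_of_nonneg_right (integral_mono_on hs.1.le
        ((intervalIntegrable_rpow' ha).div_const _) (hf.intervalIntegrable_Ico ⟨hs.1.le, hs.2⟩)
        fun t ht => rpow_div_le_qIntegrand hb hpa hppos ⟨ht.1, ht.2.trans_lt hs.2⟩) hs.1.le

theorem monotoneOn_log_qfun_div (hf : MonotoneOn (qIntegrand p a b) (Ico 0 1))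
    (hppos : ∀ M ∈ Ico (0:ℝ) 1, 0 < p M) :
    MonotoneOn (fun s => log (qfun p a b s / p s)) (Ioo 0 1) := by
  intro x hx y hy hxy
  dsimp only
  rw [qfun_div_eq hx.1.ne' (hppos x ⟨hx.1.le, hx.2⟩).ne',
    qfun_div_eq hy.1.ne' (hppos y ⟨hy.1.le, hy.2⟩).ne']
  exact log_le_log (integral_qIntegrand_div_pos hf hppos hx) (hf.monotoneOn_integral_div hx hy hxy)

theorem intervalIntegrable_log_qfun_div (ha : -1 < a) (hb : 0 ≤ b)
    (hpa : AntitoneOn p (Icc 0 1)) (hppos : ∀ M ∈ Ico (0:ℝ) 1, 0 < p M)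
    (hf : MonotoneOn (qIntegrand p a b) (Ico 0 1)) {M : ℝ} (hM : M ∈ Ioo 0 1) :
    IntervalIntegrable (fun s => log (qfun p a b s / p s)) volume 0 M := by
  refine ((monotoneOn_log_qfun_div hf hppos).mono (Ioc_subset_Ioo_right hM.2))
    |>.intervalIntegrable_of_le hM.1.le (l := fun s => a * log s - log (p 0 ^ 2 * (a + 1)))
    ((intervalIntegrable_log'.const_mul a).sub intervalIntegrable_const) fun s hs => ?_
  have hs' : s ∈ Ioo 0 1 := ⟨hs.1, hs.2.trans_lt hM.2⟩
  have hD : 0 < p 0 ^ 2 * (a + 1) :=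
    mul_pos (pow_pos (hppos 0 ⟨le_rfl, one_pos⟩) 2) (by linarith)
  rw [qfun_div_eq hs.1.ne' (hppos s ⟨hs.1.le, hs'.2⟩).ne', ← log_rpow hs.1,
    ← log_div (rpow_pos_of_pos hs.1 a).ne' hD.ne']
  exact log_le_log (div_pos (rpow_pos_of_pos hs.1 a) hD)
    (rpow_div_le_integral_qIntegrand_div ha hb hpa hppos hf hs')

theorem convexOn_integral_log_qfun_div (ha : 0 ≤ a) (hb : 0 ≤ b)
    (hpa : AntitoneOn p (Icc 0 1)) (hppos : ∀ M ∈ Ico (0:ℝ) 1, 0 < p M) :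
    ConvexOn ℝ (Ioo 0 1) (fun M => ∫ s in (0:ℝ)..M, log (qfun p a b s / p s)) :=
  have hf := qIntegrand_monotoneOn ha hb hpa hppos
  (convex_Ioo 0 1).convexOn_integral_of_monotoneOn (monotoneOn_log_qfun_div hf hppos)
    fun _ hM => intervalIntegrable_log_qfun_div (by linarith) hb hpa hppos hf hM

end qIntegrand

theorem hent_convexOn_general (a b : ℝ) (ha : 1 ≤ a) (hb : 1 ≤ b)
    (p : ℝ → ℝ)
    (hpa : AntitoneOn p (Icc 0 1))
    (hppos : ∀ M ∈ Ico (0:ℝ) 1, 0 < p M)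
    (n : ℕ) (hn : 1 ≤ n) :
    ConvexOn ℝ {u : Fin n → ℝ | (∀ i, 0 < u i) ∧ ∑ i, u i < 1} (hent p a b) := by
  have hO : Convex ℝ {u : Fin n → ℝ | (∀ i, 0 < u i) ∧ ∑ i, u i < 1} := by
    simpa [Set.pi, Set.inter_def] using (convex_pi (s := univ) fun _ _ => convex_Ioi (0:ℝ)).inter
      (convex_halfSpace_lt (isLinearMap_sum_apply n) 1)
  have hentropy := (convexOn_mul_log_sub_one_add_one.sum_comp_apply (ι := Fin n)).subset
    (fun u hu i _ => (hu.1 i).le) hO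
  have hmass := ((convexOn_integral_log_qfun_div (zero_le_one.trans ha) (zero_le_one.trans hb)
    hpa hppos).comp_linearMap (IsLinearMap.mk' _ (isLinearMap_sum_apply n))).subset
    (fun u hu => ⟨Finset.sum_pos (fun i _ => hu.1 i) ⟨⟨0, hn⟩, Finset.mem_univ _⟩, hu.2⟩) hO
  exact hentropy.add hmass

/-- The entropy density `h` is a convex function on the convex set `𝒪`. -/
theorem hent_convexOn (a b : ℝ) (ha : 1 ≤ a) (hb : 1 ≤ b)
    (p : ℝ → ℝ) (hpc : ContinuousOn p (Icc 0 1))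
    (hpa : AntitoneOn p (Icc 0 1)) (hp1 : p 1 = 0)
    (hppos : ∀ M ∈ Ico (0:ℝ) 1, 0 < p M)
    (n : ℕ) (hn : 1 ≤ n) :
    ConvexOn ℝ {u : Fin n → ℝ | (∀ i, 0 < u i) ∧ ∑ i, u i < 1} (hent p a b) :=
  hent_convexOn_general a b ha hb p hpa hppos n hn
end

section
/- For all u, v, u^D ∈ 𝒪, with M_u = Σᵢ uᵢ and M^D = Σᵢ uᵢ^D, one has Σᵢ₌₁ⁿ (uᵢ − vᵢ)·(log(uᵢ q(M_u)/p(M_u)) − log(uᵢ^D q(M^D)/p(M^D))) ≥ h*(u|u^D) − h*(v|u^D). -/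
open Real Set MeasureTheory

/-- Relative entropy density
`h*(u|u^D) = h(u) − h(u^D) − Σᵢ log(uᵢ^D q(M^D)/p(M^D)) (uᵢ − uᵢ^D)`. -/
noncomputable def hstar (p : ℝ → ℝ) (a b : ℝ) {n : ℕ} (uD u : Fin n → ℝ) : ℝ :=
  hent p a b u - hent p a b uD -
    ∑ i, Real.log (uD i * qfun p a b (∑ j, uD j) / p (∑ j, uD j)) * (u i - uD i)

private lemma xlogx_ineq {x y : ℝ} (hx : 0 < x) (hy : 0 < y) :
    x * (Real.log x - 1) + 1 - (y * (Real.log y - 1) + 1) ≤ (x - y) * Real.log x := by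
  have h := Real.log_le_sub_one_of_pos (div_pos hx hy)
  rw [Real.log_div hx.ne' hy.ne'] at h
  have h2 := mul_le_mul_of_nonneg_left h hy.le
  have h3 : y * (x / y - 1) = x - y := by field_simp
  nlinarith [h2, h3]

set_option maxHeartbeats 1600000 in
/-- For all `u, v, u^D ∈ 𝒪`:
`Σᵢ (uᵢ − vᵢ)(log(uᵢ q(M_u)/p(M_u)) − log(uᵢ^D q(M^D)/p(M^D))) ≥ h*(u|u^D) − h*(v|u^D)`. -/
theorem hstar_convexity_inequality (a b : ℝ) (ha : 1 ≤ a) (hb : 1 ≤ b)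
    (p : ℝ → ℝ) (hpc : ContinuousOn p (Icc 0 1))
    (hpa : AntitoneOn p (Icc 0 1)) (hp1 : p 1 = 0)
    (hppos : ∀ M ∈ Ico (0:ℝ) 1, 0 < p M)
    (n : ℕ) (hn : 1 ≤ n) (u v uD : Fin n → ℝ)
    (hu : u ∈ {u : Fin n → ℝ | (∀ i, 0 < u i) ∧ ∑ i, u i < 1})
    (hv : v ∈ {u : Fin n → ℝ | (∀ i, 0 < u i) ∧ ∑ i, u i < 1})
    (huD : uD ∈ {u : Fin n → ℝ | (∀ i, 0 < u i) ∧ ∑ i, u i < 1}) :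
    hstar p a b uD u - hstar p a b uD v ≤
      ∑ i, (u i - v i) *
        (Real.log (u i * qfun p a b (∑ j, u j) / p (∑ j, u j)) -
          Real.log (uD i * qfun p a b (∑ j, uD j) / p (∑ j, uD j))) := by
  obtain ⟨hu1, hu2⟩ := hu
  obtain ⟨hv1, hv2⟩ := hv
  obtain ⟨hD1, hD2⟩ := huD
  have ha0 : (0:ℝ) < a := lt_of_lt_of_le one_pos ha
  have hb0 : (0:ℝ) ≤ b := le_trans zero_le_one hb
  set g : ℝ → ℝ := fun s => s ^ a / ((1 - s) ^ b * p s ^ 2) with hgdef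
  set I : ℝ → ℝ := fun M => ∫ s in (0:ℝ)..M, g s with hIdef
  have hqfun : ∀ M : ℝ, qfun p a b M = p M / M * I M := fun M => rfl
  -- continuity of g
  have hgcont : ∀ {M : ℝ}, 0 ≤ M → M < 1 → ContinuousOn g (Icc 0 M) := by
    intro M hM0 hM1
    have hsub : Icc (0:ℝ) M ⊆ Icc 0 1 := Icc_subset_Icc le_rfl hM1.le
    have h1 : ContinuousOn (fun s : ℝ => s ^ a) (Icc 0 M) :=
      continuousOn_id.rpow_const fun x _ => Or.inr ha0.le
    have h2 : ContinuousOn (fun s : ℝ => (1 - s) ^ b * p s ^ 2) (Icc 0 M) :=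
      ((continuousOn_const.sub continuousOn_id).rpow_const fun x _ => Or.inr hb0).mul
        ((hpc.mono hsub).pow 2)
    refine h1.div h2 fun x hx => ?_
    have hx1 : x < 1 := lt_of_le_of_lt hx.2 hM1
    have h1x : (0:ℝ) < 1 - x := by linarith
    exact (mul_pos (Real.rpow_pos_of_pos h1x b) (pow_pos (hppos x ⟨hx.1, hx1⟩) 2)).ne'
  -- positivity of g
  have hgpos : ∀ {s : ℝ}, 0 < s → s < 1 → 0 < g s := by
    intro s hs0 hs1
    have h1s : (0:ℝ) < 1 - s := by linarith
    exact div_pos (Real.rpow_pos_of_pos hs0 a)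
      (mul_pos (Real.rpow_pos_of_pos h1s b) (pow_pos (hppos s ⟨hs0.le, hs1⟩) 2))
  -- monotonicity of g
  have hgmono : ∀ {s t : ℝ}, 0 ≤ s → s ≤ t → t < 1 → g s ≤ g t := by
    intro s t hs0 hst ht1
    have ht0 : 0 ≤ t := hs0.trans hst
    have h1t : (0:ℝ) < 1 - t := by linarith
    have h1s : (0:ℝ) < 1 - s := by linarith
    have hpt : 0 < p t := hppos t ⟨ht0, ht1⟩
    have hpts : p t ≤ p s := hpa ⟨hs0, by linarith⟩ ⟨ht0, ht1.le⟩ hst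
    have hden : (1 - t) ^ b * p t ^ 2 ≤ (1 - s) ^ b * p s ^ 2 :=
      mul_le_mul (Real.rpow_le_rpow h1t.le (by linarith) hb0)
        (pow_le_pow_left₀ hpt.le hpts 2) (pow_nonneg hpt.le 2) (Real.rpow_nonneg h1s.le b)
    exact div_le_div₀ (Real.rpow_nonneg ht0 a) (Real.rpow_le_rpow hs0 hst ha0.le)
      (mul_pos (Real.rpow_pos_of_pos h1t b) (pow_pos hpt 2)) hden
  -- interval integrability of g
  have hgint : ∀ {M : ℝ}, 0 ≤ M → M < 1 → IntervalIntegrable g volume 0 M := by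
    intro M hM0 hM1
    have h := hgcont hM0 hM1
    rw [← uIcc_of_le hM0] at h
    exact h.intervalIntegrable
  have hgint' : ∀ {s t : ℝ}, 0 ≤ s → s ≤ t → t < 1 → IntervalIntegrable g volume s t := by
    intro s t hs0 hst ht1
    have h := (hgcont (hs0.trans hst) ht1).mono (Icc_subset_Icc hs0 le_rfl)
    rw [← uIcc_of_le hst] at h
    exact h.intervalIntegrable
  -- positivity of I
  have hIpos : ∀ {M : ℝ}, 0 < M → M < 1 → 0 < I M := by
    intro M hM0 hM1
    exact intervalIntegral.intervalIntegral_pos_of_pos_on (hgint hM0.le hM1)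
      (fun x hx => hgpos hx.1 (hx.2.trans hM1)) hM0
  -- I s ≤ s * g s
  have hI_le : ∀ {s : ℝ}, 0 < s → s < 1 → I s ≤ s * g s := by
    intro s hs0 hs1
    have h := intervalIntegral.integral_mono_on hs0.le (hgint hs0.le hs1)
      intervalIntegrable_const (fun x hx => hgmono hx.1 hx.2 hs1)
    rw [intervalIntegral.integral_const, smul_eq_mul, sub_zero] at h
    exact h
  -- monotonicity of I s / s
  have hphimono : ∀ {s t : ℝ}, 0 < s → s ≤ t → t < 1 → I s / s ≤ I t / t := by
    intro s t hs0 hst ht1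
    have ht0 : 0 < t := lt_of_lt_of_le hs0 hst
    have h1 : I s ≤ s * g s := hI_le hs0 (lt_of_le_of_lt hst ht1)
    have h2 : (t - s) * g s ≤ ∫ x in s..t, g x := by
      have h := intervalIntegral.integral_mono_on hst intervalIntegrable_const
        (hgint' hs0.le hst ht1)
        (fun x hx => hgmono hs0.le hx.1 (lt_of_le_of_lt hx.2 ht1))
      rw [intervalIntegral.integral_const, smul_eq_mul] at h
      exact h
    have h3 : I s + ∫ x in s..t, g x = I t :=
      intervalIntegral.integral_add_adjacent_intervals
        (hgint hs0.le (lt_of_le_of_lt hst ht1)) (hgint' hs0.le hst ht1)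
    rw [div_le_div_iff₀ hs0 ht0]
    nlinarith [mul_le_mul_of_nonneg_left h2 hs0.le,
      mul_le_mul_of_nonneg_left h1 (sub_nonneg.2 hst)]
  -- rewrite qfun / p
  have hqp : ∀ {s : ℝ}, 0 < s → s < 1 → qfun p a b s / p s = I s / s := by
    intro s hs0 hs1
    have hps : p s ≠ 0 := (hppos s ⟨hs0.le, hs1⟩).ne'
    rw [hqfun]
    field_simp
  set f : ℝ → ℝ := fun s => Real.log (qfun p a b s / p s) with hfdef
  have hfeq : ∀ {s : ℝ}, 0 < s → s < 1 → f s = Real.log (I s / s) := by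
    intro s hs0 hs1
    simp only [hfdef, hqp hs0 hs1]
  -- monotonicity of f
  have hfmono : ∀ {s t : ℝ}, 0 < s → s ≤ t → t < 1 → f s ≤ f t := by
    intro s t hs0 hst ht1
    rw [hfeq hs0 (lt_of_le_of_lt hst ht1), hfeq (lt_of_lt_of_le hs0 hst) ht1]
    exact Real.log_le_log (div_pos (hIpos hs0 (lt_of_le_of_lt hst ht1)) hs0)
      (hphimono hs0 hst ht1)
  -- continuity of I
  have hIcont : ∀ {M : ℝ}, 0 ≤ M → M < 1 → ContinuousOn I (Icc 0 M) := by
    intro M hM0 hM1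
    have h := intervalIntegral.continuousOn_primitive_interval (μ := volume)
      (f := g) (a := 0) (b := M) (by
        rw [uIcc_of_le hM0]
        exact (hgcont hM0 hM1).integrableOn_Icc)
    rwa [uIcc_of_le hM0] at h
  -- continuity of f on compact subintervals of (0,1)
  have hfcont : ∀ {s t : ℝ}, 0 < s → s ≤ t → t < 1 → ContinuousOn f (Icc s t) := by
    intro s t hs0 hst ht1
    have hc : ContinuousOn (fun x => Real.log (I x / x)) (Icc s t) := by
      refine ContinuousOn.log ?_ ?_
      · exact (((hIcont (hs0.le.trans hst) ht1).mono
          (Icc_subset_Icc hs0.le le_rfl)).div continuousOn_id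
          fun x hx => (lt_of_lt_of_le hs0 hx.1).ne')
      · exact fun x hx => (div_pos (hIpos (lt_of_lt_of_le hs0 hx.1)
          (lt_of_le_of_lt hx.2 ht1)) (lt_of_lt_of_le hs0 hx.1)).ne'
    exact hc.congr fun x hx =>
      hfeq (lt_of_lt_of_le hs0 hx.1) (lt_of_le_of_lt hx.2 ht1)
  -- interval integrability of f on [0, M]
  have hfint0 : ∀ {M : ℝ}, 0 < M → M < 1 → IntervalIntegrable f volume 0 M := by
    intro M hM0 hM1
    rw [intervalIntegrable_iff_integrableOn_Ioc_of_le hM0.le]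
    have hp0 : 0 < p 0 := hppos 0 ⟨le_rfl, one_pos⟩
    have hpM : 0 < p M := hppos M ⟨hM0.le, hM1⟩
    have h1M : (0:ℝ) < 1 - M := by linarith
    set c1 : ℝ := 1 / p 0 ^ 2 with hc1def
    set c2 : ℝ := 1 / ((1 - M) ^ b * p M ^ 2) with hc2def
    have hc1 : 0 < c1 := by positivity
    have hc2 : 0 < c2 := by
      have := mul_pos (Real.rpow_pos_of_pos h1M b) (pow_pos hpM 2)
      positivity
    have ha1 : (0:ℝ) < a + 1 := by linarith
    set d1 : ℝ := Real.log (c1 / (a + 1)) with hd1def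
    set d2 : ℝ := Real.log (c2 / (a + 1)) with hd2def
    set C : ℝ := |d1| + |d2| with hCdef
    -- lower bound on I
    have hIlow : ∀ s ∈ Ioc (0:ℝ) M, c1 * s ^ (a + 1) / (a + 1) ≤ I s := by
      intro s hs
      have hs1 : s < 1 := lt_of_le_of_lt hs.2 hM1
      have key : ∀ x ∈ Icc (0:ℝ) s, c1 * x ^ a ≤ g x := by
        intro x hx
        have hx1 : x < 1 := lt_of_le_of_lt hx.2 hs1
        have hpx : 0 < p x := hppos x ⟨hx.1, hx1⟩
        have h1x : (0:ℝ) < 1 - x := by linarith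
        have hd1' : (1 - x) ^ b ≤ 1 := Real.rpow_le_one h1x.le (by linarith [hx.1]) hb0
        have hd2' : p x ≤ p 0 := hpa ⟨le_rfl, zero_le_one⟩ ⟨hx.1, hx1.le⟩ hx.1
        have hDpos : 0 < (1 - x) ^ b * p x ^ 2 :=
          mul_pos (Real.rpow_pos_of_pos h1x b) (pow_pos hpx 2)
        have hden : (1 - x) ^ b * p x ^ 2 ≤ p 0 ^ 2 := by nlinarith
        have hxa : 0 ≤ x ^ a := Real.rpow_nonneg hx.1 a
        have : x ^ a / p 0 ^ 2 ≤ x ^ a / ((1 - x) ^ b * p x ^ 2) := by gcongr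
        calc c1 * x ^ a = x ^ a / p 0 ^ 2 := by rw [hc1def]; ring
          _ ≤ g x := this
      have hcalc : ∫ x in (0:ℝ)..s, c1 * x ^ a = c1 * s ^ (a + 1) / (a + 1) := by
        rw [intervalIntegral.integral_const_mul, integral_rpow (Or.inl (by linarith))]
        rw [Real.zero_rpow (by linarith : a + 1 ≠ 0)]
        ring
      have h := intervalIntegral.integral_mono_on hs.1.le
        ((intervalIntegral.intervalIntegrable_rpow' (by linarith)).const_mul c1)
        (hgint hs.1.le hs1) key
      rw [hcalc] at h
      exact h
    -- upper bound on I
    have hIup : ∀ s ∈ Ioc (0:ℝ) M, I s ≤ c2 * s ^ (a + 1) / (a + 1) := by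
      intro s hs
      have hs1 : s < 1 := lt_of_le_of_lt hs.2 hM1
      have key : ∀ x ∈ Icc (0:ℝ) s, g x ≤ c2 * x ^ a := by
        intro x hx
        have hx1 : x < 1 := lt_of_le_of_lt hx.2 hs1
        have hxM : x ≤ M := hx.2.trans hs.2
        have hpx : 0 < p x := hppos x ⟨hx.1, hx1⟩
        have h1x : (0:ℝ) < 1 - x := by linarith
        have hd1' : (1 - M) ^ b ≤ (1 - x) ^ b :=
          Real.rpow_le_rpow h1M.le (by linarith [hxM]) hb0
        have hd2' : p M ≤ p x := hpa ⟨hx.1, hx1.le⟩ ⟨hM0.le, hM1.le⟩ hxM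
        have hDpos : 0 < (1 - M) ^ b * p M ^ 2 :=
          mul_pos (Real.rpow_pos_of_pos h1M b) (pow_pos hpM 2)
        have hden : (1 - M) ^ b * p M ^ 2 ≤ (1 - x) ^ b * p x ^ 2 :=
          mul_le_mul hd1' (pow_le_pow_left₀ hpM.le hd2' 2) (pow_nonneg hpM.le 2)
            (Real.rpow_nonneg h1x.le b)
        have hxa : 0 ≤ x ^ a := Real.rpow_nonneg hx.1 a
        have : x ^ a / ((1 - x) ^ b * p x ^ 2) ≤ x ^ a / ((1 - M) ^ b * p M ^ 2) := by gcongr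
        calc g x ≤ x ^ a / ((1 - M) ^ b * p M ^ 2) := this
          _ = c2 * x ^ a := by rw [hc2def]; ring
      have hcalc : ∫ x in (0:ℝ)..s, c2 * x ^ a = c2 * s ^ (a + 1) / (a + 1) := by
        rw [intervalIntegral.integral_const_mul, integral_rpow (Or.inl (by linarith))]
        rw [Real.zero_rpow (by linarith : a + 1 ≠ 0)]
        ring
      have h := intervalIntegral.integral_mono_on hs.1.le (hgint hs.1.le hs1)
        ((intervalIntegral.intervalIntegrable_rpow' (by linarith)).const_mul c2) key
      rw [hcalc] at h
      exact h
    -- log bounds on f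
    have hbound : ∀ s ∈ Ioc (0:ℝ) M,
        d1 + a * Real.log s ≤ f s ∧ f s ≤ d2 + a * Real.log s := by
      intro s hs
      have hs1 : s < 1 := lt_of_le_of_lt hs.2 hM1
      rw [hfeq hs.1 hs1]
      have hIposs : 0 < I s := hIpos hs.1 hs1
      have hsa : 0 < s ^ a := Real.rpow_pos_of_pos hs.1 a
      have hlow' : c1 / (a + 1) * s ^ a ≤ I s / s := by
        rw [le_div_iff₀ hs.1]
        calc c1 / (a + 1) * s ^ a * s = c1 * (s ^ a * s) / (a + 1) := by ring
          _ = c1 * s ^ (a + 1) / (a + 1) := by rw [← Real.rpow_add_one hs.1.ne' a]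
          _ ≤ I s := hIlow s hs
      have hup' : I s / s ≤ c2 / (a + 1) * s ^ a := by
        rw [div_le_iff₀ hs.1]
        calc I s ≤ c2 * s ^ (a + 1) / (a + 1) := hIup s hs
          _ = c2 / (a + 1) * s ^ a * s := by
              rw [Real.rpow_add_one hs.1.ne' a]; ring
      constructor
      · have h := Real.log_le_log (by positivity) hlow'
        rwa [Real.log_mul (by positivity) hsa.ne', Real.log_rpow hs.1] at h
      · have h := Real.log_le_log (div_pos hIposs hs.1) hup'
        rwa [Real.log_mul (by positivity) hsa.ne', Real.log_rpow hs.1] at h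
    -- absolute bound
    have habs : ∀ s ∈ Ioc (0:ℝ) M, |f s| ≤ 2 * a * s ^ (-(1:ℝ)/2) + C := by
      intro s hs
      have hs1 : s < 1 := lt_of_le_of_lt hs.2 hM1
      have hls : Real.log s ≤ 0 := Real.log_nonpos hs.1.le hs1.le
      have hrp : 0 < s ^ (-(1:ℝ)/2) := Real.rpow_pos_of_pos hs.1 _
      have hneg : -Real.log s ≤ 2 * s ^ (-(1:ℝ)/2) := by
        have h := Real.log_le_sub_one_of_pos hrp
        rw [Real.log_rpow hs.1] at h
        linarith
      obtain ⟨hlow, hup⟩ := hbound s hs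
      rw [abs_le]
      constructor
      · nlinarith [mul_le_mul_of_nonneg_left hneg ha0.le, neg_abs_le d1, le_abs_self d1,
          abs_nonneg d2]
      · nlinarith [mul_nonneg ha0.le (neg_nonneg.2 hls), le_abs_self d2, abs_nonneg d1,
          mul_nonneg (by linarith : (0:ℝ) ≤ 2 * a) hrp.le]
    -- dominating function is integrable
    have hDint : IntegrableOn (fun s => 2 * a * s ^ (-(1:ℝ)/2) + C) (Ioc 0 M) volume := by
      have h := ((intervalIntegral.intervalIntegrable_rpow'
        (r := -(1:ℝ)/2) (by norm_num)).const_mul (2 * a)).add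
        (intervalIntegrable_const (c := C)) (a := 0) (b := M)
      rwa [intervalIntegrable_iff_integrableOn_Ioc_of_le hM0.le] at h
    -- measurability
    have hmeas : AEStronglyMeasurable f (volume.restrict (Ioc 0 M)) := by
      have hc : ContinuousOn (fun x => Real.log (I x / x)) (Ioc 0 M) := by
        refine ContinuousOn.log ?_ ?_
        · exact ((hIcont hM0.le hM1).mono Ioc_subset_Icc_self).div continuousOn_id
            fun x hx => hx.1.ne'
        · exact fun x hx => (div_pos (hIpos hx.1 (lt_of_le_of_lt hx.2 hM1)) hx.1).ne'
      refine (hc.aestronglyMeasurable measurableSet_Ioc).congr ?_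
      refine (ae_restrict_iff' measurableSet_Ioc).2 (ae_of_all _ fun x hx => ?_)
      exact (hfeq hx.1 (lt_of_le_of_lt hx.2 hM1)).symm
    refine Integrable.mono' hDint hmeas ?_
    refine (ae_restrict_iff' measurableSet_Ioc).2 (ae_of_all _ fun s hs => ?_)
    rw [Real.norm_eq_abs]
    exact habs s hs
  -- key integral inequality
  have hkeyint : ∀ {Mv Mu : ℝ}, 0 < Mv → Mv < 1 → 0 < Mu → Mu < 1 →
      (∫ s in Mv..Mu, f s) ≤ (Mu - Mv) * f Mu := by
    intro Mv Mu hv0 hv1 hu0 hu1'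
    rcases le_or_gt Mv Mu with h | h
    · have hint : IntervalIntegrable f volume Mv Mu := by
        have hc := hfcont hv0 h hu1'
        rw [← uIcc_of_le h] at hc
        exact hc.intervalIntegrable
      have hmono := intervalIntegral.integral_mono_on h hint intervalIntegrable_const
        (fun x hx => hfmono (lt_of_lt_of_le hv0 hx.1) hx.2 hu1')
      rw [intervalIntegral.integral_const, smul_eq_mul] at hmono
      exact hmono
    · have hint : IntervalIntegrable f volume Mu Mv := by
        have hc := hfcont hu0 h.le hv1
        rw [← uIcc_of_le h.le] at hc
        exact hc.intervalIntegrable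
      rw [intervalIntegral.integral_symm]
      have hmono := intervalIntegral.integral_mono_on h.le intervalIntegrable_const hint
        (fun x hx => hfmono hu0 hx.1 (lt_of_le_of_lt hx.2 hv1))
      simp only [intervalIntegral.integral_const, smul_eq_mul] at hmono
      linarith
  -- sums
  have hne : Nonempty (Fin n) := ⟨⟨0, hn⟩⟩
  have hMu0 : 0 < ∑ i, u i := Finset.sum_pos (fun i _ => hu1 i) Finset.univ_nonempty
  have hMv0 : 0 < ∑ i, v i := Finset.sum_pos (fun i _ => hv1 i) Finset.univ_nonempty
  have hMD0 : 0 < ∑ i, uD i := Finset.sum_pos (fun i _ => hD1 i) Finset.univ_nonempty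
  -- log A decomposition
  have hA : ∀ i, Real.log (u i * qfun p a b (∑ j, u j) / p (∑ j, u j))
      = Real.log (u i) + f (∑ j, u j) := by
    intro i
    have hne0 : qfun p a b (∑ j, u j) / p (∑ j, u j) ≠ 0 := by
      rw [hqp hMu0 hu2]
      exact (div_pos (hIpos hMu0 hu2) hMu0).ne'
    simp only [hfdef]
    rw [mul_div_assoc, Real.log_mul (hu1 i).ne' hne0]
  -- key inequality
  have key : hent p a b u - hent p a b v ≤
      ∑ i, (u i - v i) * Real.log (u i * qfun p a b (∑ j, u j) / p (∑ j, u j)) := by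
    have hSsum : (∑ i, (u i * (Real.log (u i) - 1) + 1)) -
        (∑ i, (v i * (Real.log (v i) - 1) + 1)) ≤ ∑ i, (u i - v i) * Real.log (u i) := by
      rw [← Finset.sum_sub_distrib]
      exact Finset.sum_le_sum fun i _ => xlogx_ineq (hu1 i) (hv1 i)
    have hintdiff : (∫ s in (0:ℝ)..(∑ i, u i), f s) - (∫ s in (0:ℝ)..(∑ i, v i), f s)
        = ∫ s in (∑ i, v i)..(∑ i, u i), f s :=
      intervalIntegral.integral_interval_sub_left (hfint0 hMu0 hu2) (hfint0 hMv0 hv2)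
    have hsumA : ∑ i, (u i - v i) * Real.log (u i * qfun p a b (∑ j, u j) / p (∑ j, u j))
        = (∑ i, (u i - v i) * Real.log (u i)) + ((∑ i, u i) - (∑ i, v i)) * f (∑ j, u j) := by
      rw [← Finset.sum_sub_distrib, Finset.sum_mul, ← Finset.sum_add_distrib]
      refine Finset.sum_congr rfl fun i _ => ?_
      rw [hA i]
      ring
    have hI2 := hkeyint hMv0 hv2 hMu0 hu2
    simp only [hent]
    rw [hsumA, ← hfdef]
    linarith [hSsum, hintdiff, hI2]
  -- final assembly
  simp only [hstar]
  have hLsum : (∑ i, Real.log (uD i * qfun p a b (∑ j, uD j) / p (∑ j, uD j)) * (u i - uD i))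
      - (∑ i, Real.log (uD i * qfun p a b (∑ j, uD j) / p (∑ j, uD j)) * (v i - uD i))
      = ∑ i, Real.log (uD i * qfun p a b (∑ j, uD j) / p (∑ j, uD j)) * (u i - v i) := by
    rw [← Finset.sum_sub_distrib]
    exact Finset.sum_congr rfl fun i _ => by ring
  have hRsum : ∑ i, (u i - v i) *
        (Real.log (u i * qfun p a b (∑ j, u j) / p (∑ j, u j)) -
          Real.log (uD i * qfun p a b (∑ j, uD j) / p (∑ j, uD j)))
      = (∑ i, (u i - v i) * Real.log (u i * qfun p a b (∑ j, u j) / p (∑ j, u j)))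
        - ∑ i, Real.log (uD i * qfun p a b (∑ j, uD j) / p (∑ j, uD j)) * (u i - v i) := by
    rw [← Finset.sum_sub_distrib]
    exact Finset.sum_congr rfl fun i _ => by ring
  rw [hRsum]
  linarith [key, hLsum]
end

section
/- There exist constants K₁ > 0 and K₂ > 0 such that p(M) ≤ K₁ · exp(−K₂ (1−M)^(−κ)) for all M ∈ (0,1). -/
/-!
Near `M = 1` the limit gives `p' ≤ -(c/2) (1 - M)^(-1-κ) p`, which says exactly that
`p(M) · exp(K₂ (1 - M)^(-κ))` with `K₂ = c/(2κ)` is nonincreasing there. Below that range, `p` is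
bounded by `p(0)` and the exponential factor by its value at the start of the range.
-/

open Real Set Filter Topology

theorem antitoneOn_mul_exp_of_hasDerivWithinAt {D : Set ℝ} (hD : Convex ℝ D)
    {f f' G G' : ℝ → ℝ} (hf : ∀ x ∈ D, HasDerivWithinAt f (f' x) D x)
    (hG : ∀ x ∈ D, HasDerivWithinAt G (G' x) D x)
    (hfG : ∀ x ∈ interior D, f' x + f x * G' x ≤ 0) :
    AntitoneOn (fun x => f x * exp (G x)) D := by
  have hderiv : ∀ x ∈ D, HasDerivWithinAt (fun x => f x * exp (G x))
      ((f' x + f x * G' x) * exp (G x)) D x := fun x hx =>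
    ((hf x hx).fun_mul (hG x hx).exp).congr_deriv (by ring)
  exact antitoneOn_of_hasDerivWithinAt_nonpos hD
    (fun x hx => (hderiv x hx).continuousWithinAt)
    (fun x hx => (hderiv x (interior_subset hx)).mono interior_subset)
    (fun x hx => mul_nonpos_of_nonpos_of_nonneg (hfG x hx) (exp_pos _).le)

theorem mul_exp_le_of_antitoneOn_Ico {f G : ℝ → ℝ} {a b M₀ : ℝ} (hM₀ : M₀ ∈ Ico a b)
    (hf : AntitoneOn f (Ico a b)) (hfa : 0 ≤ f a) (hG : MonotoneOn G (Ico a b))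
    (hfG : AntitoneOn (fun x => f x * exp (G x)) (Ico M₀ b)) :
    ∀ x ∈ Ico a b, f x * exp (G x) ≤ f a * exp (G M₀) := by
  intro x hx
  have hle_fa : ∀ y ∈ Ico a b, f y ≤ f a := fun y hy => hf ⟨le_rfl, hy.1.trans_lt hy.2⟩ hy hy.1
  rcases lt_or_ge x M₀ with hxM₀ | hM₀x
  · exact mul_le_mul (hle_fa x hx) (exp_le_exp.2 (hG hx hM₀ hxM₀.le)) (exp_pos _).le hfa
  · calc f x * exp (G x) ≤ f M₀ * exp (G M₀) := hfG ⟨le_rfl, hM₀.2⟩ ⟨hM₀x, hx.2⟩ hM₀x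
      _ ≤ f a * exp (G M₀) := by gcongr; exact hle_fa M₀ hM₀

theorem hasDerivAt_one_sub_rpow_neg (κ : ℝ) {x : ℝ} (hx : x < 1) :
    HasDerivAt (fun y : ℝ => (1 - y) ^ (-κ)) (κ * (1 - x) ^ (-κ - 1)) x := by
  convert ((hasDerivAt_id' x).const_sub 1).rpow_const (p := -κ) (Or.inl (sub_pos.2 hx).ne')
    using 1
  ring

theorem monotoneOn_one_sub_rpow_neg {κ : ℝ} (hκ : 0 ≤ κ) :
    MonotoneOn (fun y : ℝ => (1 - y) ^ (-κ)) (Iio 1) := fun _ _ _ hy hxy =>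
  rpow_le_rpow_of_nonpos (sub_pos.2 hy) (by linarith) (neg_nonpos.2 hκ)

theorem eventually_deriv_add_mul_rpow_nonpos {p p' : ℝ → ℝ} {κ c c' : ℝ}
    (hpos : ∀ᶠ x in 𝓝[<] 1, 0 < p x)
    (hlim : Tendsto (fun M => -((1 - M) ^ (1 + κ) * p' M / p M)) (𝓝[<] 1) (𝓝 c))
    (hc' : c' < c) :
    ∀ᶠ x in 𝓝[<] 1, p' x + p x * (c' * (1 - x) ^ (-κ - 1)) ≤ 0 := by
  filter_upwards [hpos, hlim.eventually (lt_mem_nhds hc'), self_mem_nhdsWithin]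
    with x hpx hx (hx1 : x < 1)
  set A := (1 - x) ^ (1 + κ)
  have hA : 0 < A := rpow_pos_of_pos (sub_pos.2 hx1) _
  have hp'x : p' x < -c' / A * p x := by
    rw [← div_lt_iff₀ hpx, lt_div_iff₀ hA]
    linarith [mul_div_assoc A (p' x) (p x)]
  rw [show -κ - 1 = -(1 + κ) by ring, rpow_neg (sub_pos.2 hx1).le]
  linarith [show -c' / A * p x = -(p x * (c' * A⁻¹)) by ring]

theorem p_exponential_upper_bound_general (κ c : ℝ) (hκ : 0 < κ) (hc : 0 < c)
    (p p' : ℝ → ℝ)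
    (hppos : ∀ M ∈ Ico (0:ℝ) 1, 0 < p M)
    (hpa : AntitoneOn p (Ico 0 1))
    (hp' : ∀ M ∈ Ico (0:ℝ) 1, HasDerivWithinAt p (p' M) (Ico 0 1) M)
    (hlim : Filter.Tendsto (fun M => -((1 - M) ^ (1 + κ) * p' M / p M))
      (nhdsWithin 1 (Iio 1)) (nhds c)) :
    ∃ K₁ > (0:ℝ), ∃ K₂ > (0:ℝ), ∀ M ∈ Ioo (0:ℝ) 1,
      p M ≤ K₁ * Real.exp (-K₂ * (1 - M) ^ (-κ)) := by
  set K₂ := c / (2 * κ)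
  have hK₂ : 0 < K₂ := by positivity
  set G : ℝ → ℝ := fun x => K₂ * (1 - x) ^ (-κ)
  have hG : ∀ x < 1, HasDerivAt G (c / 2 * (1 - x) ^ (-κ - 1)) x := fun x hx =>
    ((hasDerivAt_one_sub_rpow_neg κ hx).const_mul K₂).congr_deriv (by simp only [K₂]; field_simp)
  obtain ⟨M₀, ⟨hM₀0, hM₀1⟩, hM₀⟩ := (mem_nhdsLT_iff_exists_mem_Ico_Ioo_subset zero_lt_one).1
    (eventually_deriv_add_mul_rpow_nonpos (mem_of_superset (Ico_mem_nhdsLT zero_lt_one) hppos)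
      hlim (half_lt_self hc))
  have hanti : AntitoneOn (fun x => p x * exp (G x)) (Ico M₀ 1) :=
    antitoneOn_mul_exp_of_hasDerivWithinAt (convex_Ico M₀ 1)
      (fun x hx => (hp' x ⟨hM₀0.trans hx.1, hx.2⟩).mono (Ico_subset_Ico_left hM₀0))
      (fun x hx => (hG x hx.2).hasDerivWithinAt) (by rw [interior_Ico]; exact fun x hx => hM₀ hx)
  have hGmono : MonotoneOn G (Ico 0 1) := fun x hx y hy hxy =>
    mul_le_mul_of_nonneg_left (monotoneOn_one_sub_rpow_neg hκ.le hx.2 hy.2 hxy) hK₂.le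
  have hp0 : 0 < p 0 := hppos 0 ⟨le_rfl, one_pos⟩
  have hbound := mul_exp_le_of_antitoneOn_Ico ⟨hM₀0, hM₀1⟩ hpa hp0.le hGmono hanti
  refine ⟨p 0 * exp (G M₀), by positivity, K₂, hK₂, fun M hM => ?_⟩
  rw [neg_mul, exp_neg, ← div_eq_mul_inv, le_div_iff₀ (exp_pos _)]
  exact hbound M ⟨hM.1.le, hM.2⟩

/-- If `p : [0,1) → (0,∞)` is `C¹`, nonincreasing, and
`−(1−M)^{1+κ} p′(M)/p(M) → c > 0` as `M → 1⁻`, then there are constants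
`K₁, K₂ > 0` with `p(M) ≤ K₁ exp(−K₂ (1−M)^{−κ})` for all `M ∈ (0,1)`. -/
theorem p_exponential_upper_bound (κ c : ℝ) (hκ : 0 < κ) (hc : 0 < c)
    (p p' : ℝ → ℝ)
    (hppos : ∀ M ∈ Ico (0:ℝ) 1, 0 < p M)
    (hpa : AntitoneOn p (Ico 0 1))
    (hp' : ∀ M ∈ Ico (0:ℝ) 1, HasDerivWithinAt p (p' M) (Ico 0 1) M)
    (hp'c : ContinuousOn p' (Ico 0 1))
    (hlim : Filter.Tendsto (fun M => -((1 - M) ^ (1 + κ) * p' M / p M))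
      (nhdsWithin 1 (Iio 1)) (nhds c)) :
    ∃ K₁ > (0:ℝ), ∃ K₂ > (0:ℝ), ∀ M ∈ Ioo (0:ℝ) 1,
      p M ≤ K₁ * Real.exp (-K₂ * (1 - M) ^ (-κ)) :=
  p_exponential_upper_bound_general κ c hκ hc p p' hppos hpa hp' hlim
end

section
/- The function f(M) = √(q(M)/p(M)) is continuously differentiable on (0,1) and satisfies f′(M) ≥ (a/(2M)) · f(M) for all M ∈ (0,1). -/
open Real Set MeasureTheory

/-! On `(0,1)`, `q(M)/p(M) = I(M)/M` with `I(M) = ∫₀^M s^a / w(s) ds` and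
`w(s) = (1-s)^b p(s)²`. Since `w` is nonincreasing,
`I(M) ≤ w(M)⁻¹ ∫₀^M s^a ds = M^(a+1) / ((a+1) w(M)) = M I'(M) / (a+1)`, hence
`(I/M)' = (M I'(M) - I(M))/M² ≥ a I(M)/M²`; taking the square root halves the factor `a/M`. -/

theorem contDiffOn_one_of_hasDerivAt {𝕜 F : Type*} [NontriviallyNormedField 𝕜]
    [NormedAddCommGroup F] [NormedSpace 𝕜 F] {f f' : 𝕜 → F} {s : Set 𝕜} (hs : IsOpen s)
    (hf : ∀ x ∈ s, HasDerivAt f (f' x) x) (hf' : ContinuousOn f' s) :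
    ContDiffOn 𝕜 1 f s := by
  rw [show (1 : WithTop ℕ∞) = 0 + 1 from rfl, contDiffOn_succ_iff_deriv_of_isOpen hs]
  refine ⟨fun x hx => (hf x hx).differentiableAt.differentiableWithinAt, by simp, ?_⟩
  exact contDiffOn_zero.2 (hf'.congr fun x hx => (hf x hx).deriv)

section IntegralFromZero

variable {g : ℝ → ℝ} {d : ℝ}

theorem hasDerivAt_integral_of_continuousOn_Ico (hg : ContinuousOn g (Ico 0 d)) {M : ℝ}
    (hM : M ∈ Ioo 0 d) : HasDerivAt (fun x => ∫ s in (0:ℝ)..x, g s) (g M) M := by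
  have hint : IntervalIntegrable g volume 0 M :=
    (hg.mono (Icc_subset_Ico_right hM.2)).intervalIntegrable_of_Icc hM.1.le
  have hg' : ContinuousOn g (Ioo 0 d) := hg.mono Ioo_subset_Ico_self
  exact intervalIntegral.integral_hasDerivAt_right hint
    (hg'.stronglyMeasurableAtFilter isOpen_Ioo M hM) (hg'.continuousAt (isOpen_Ioo.mem_nhds hM))

theorem integral_pos_of_continuousOn_Ico (hg : ContinuousOn g (Ico 0 d))
    (hpos : ∀ s ∈ Ioo 0 d, 0 < g s) {M : ℝ} (hM : M ∈ Ioo 0 d) :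
    0 < ∫ s in (0:ℝ)..M, g s :=
  intervalIntegral.intervalIntegral_pos_of_pos_on
    ((hg.mono (Icc_subset_Ico_right hM.2)).intervalIntegrable_of_Icc hM.1.le)
    (fun s hs => hpos s ⟨hs.1, hs.2.trans hM.2⟩) hM.1

theorem contDiffOn_sqrt_integral_div (hg : ContinuousOn g (Ico 0 d))
    (hpos : ∀ s ∈ Ioo 0 d, 0 < g s) :
    ContDiffOn ℝ 1 (fun M => √((∫ s in (0:ℝ)..M, g s) / M)) (Ioo 0 d) := by
  have hI : ContDiffOn ℝ 1 (fun M => ∫ s in (0:ℝ)..M, g s) (Ioo 0 d) :=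
    contDiffOn_one_of_hasDerivAt isOpen_Ioo
      (fun _ hM => hasDerivAt_integral_of_continuousOn_Ico hg hM) (hg.mono Ioo_subset_Ico_self)
  refine (hI.div contDiffOn_id fun M hM => hM.1.ne').sqrt fun M hM => ?_
  exact (div_pos (integral_pos_of_continuousOn_Ico hg hpos hM) hM.1).ne'

theorem le_deriv_sqrt_integral_div (hg : ContinuousOn g (Ico 0 d))
    (hpos : ∀ s ∈ Ioo 0 d, 0 < g s) {a M : ℝ} (hM : M ∈ Ioo 0 d)
    (hbound : (a + 1) * ∫ s in (0:ℝ)..M, g s ≤ M * g M) :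
    a / (2 * M) * √((∫ s in (0:ℝ)..M, g s) / M) ≤
      deriv (fun M => √((∫ s in (0:ℝ)..M, g s) / M)) M := by
  set I := ∫ s in (0:ℝ)..M, g s
  have hI : 0 < I := integral_pos_of_continuousOn_Ico hg hpos hM
  have hM0 : 0 < M := hM.1
  have hderiv : HasDerivAt (fun x => √((∫ s in (0:ℝ)..x, g s) / x))
      ((g M * M - I * 1) / M ^ 2 / (2 * √(I / M))) M :=
    ((hasDerivAt_integral_of_continuousOn_Ico hg hM).div (hasDerivAt_id' M) hM0.ne').sqrt
      (div_pos hI hM0).ne'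
  rw [hderiv.deriv]
  have hsqrt : 0 < √(I / M) := sqrt_pos.2 (div_pos hI hM0)
  have hsq : √(I / M) ^ 2 = I / M := sq_sqrt (div_pos hI hM0).le
  rw [le_div_iff₀ (by positivity), mul_one]
  calc a / (2 * M) * √(I / M) * (2 * √(I / M)) = a * I / M ^ 2 := by
        rw [show a / (2 * M) * √(I / M) * (2 * √(I / M)) = a / M * √(I / M) ^ 2 by ring, hsq]
        field_simp
    _ ≤ (g M * M - I) / M ^ 2 := by gcongr; linarith

end IntegralFromZero

theorem add_one_mul_integral_rpow_div_le {w : ℝ → ℝ} {a M : ℝ} (ha : -1 < a) (hM : 0 < M)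
    (hw : AntitoneOn w (Icc 0 M)) (hwM : 0 < w M)
    (hint : IntervalIntegrable (fun s => s ^ a / w s) volume 0 M) :
    (a + 1) * ∫ s in (0:ℝ)..M, s ^ a / w s ≤ M * (M ^ a / w M) := by
  have hle : ∫ s in (0:ℝ)..M, s ^ a / w s ≤ ∫ s in (0:ℝ)..M, s ^ a / w M := by
    refine intervalIntegral.integral_mono_on hM.le hint
      ((intervalIntegral.intervalIntegrable_rpow' ha).div_const _) fun s hs => ?_
    exact div_le_div_of_nonneg_left (rpow_nonneg hs.1 a) hwM
      (hw hs ⟨hM.le, le_rfl⟩ hs.2)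
  have ha1 : a + 1 ≠ 0 := by linarith
  have hexact : (a + 1) * ∫ s in (0:ℝ)..M, s ^ a / w M = M * (M ^ a / w M) := by
    rw [intervalIntegral.integral_div, integral_rpow (Or.inl ha), zero_rpow ha1,
      rpow_add_one hM.ne', sub_zero]
    field_simp
  calc (a + 1) * ∫ s in (0:ℝ)..M, s ^ a / w s
      ≤ (a + 1) * ∫ s in (0:ℝ)..M, s ^ a / w M := mul_le_mul_of_nonneg_left hle (by linarith)
    _ = M * (M ^ a / w M) := hexact

section Weight

variable {p : ℝ → ℝ}

theorem one_sub_rpow_mul_sq_pos (b : ℝ) (hp : ∀ s ∈ Ico (0:ℝ) 1, 0 < p s) {s : ℝ}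
    (hs : s ∈ Ico 0 1) : 0 < (1 - s) ^ b * p s ^ 2 :=
  mul_pos (rpow_pos_of_pos (by linarith [hs.2]) b) (pow_pos (hp s hs) 2)

theorem antitoneOn_one_sub_rpow_mul_sq {b : ℝ} (hp : ∀ s ∈ Ico (0:ℝ) 1, 0 < p s)
    (hb : 0 ≤ b) (hpa : AntitoneOn p (Ico 0 1)) :
    AntitoneOn (fun s => (1 - s) ^ b * p s ^ 2) (Ico 0 1) := by
  intro s hs t ht hst
  exact mul_le_mul (rpow_le_rpow (by linarith [ht.2]) (by linarith) hb)
    (pow_le_pow_left₀ (hp t ht).le (hpa hs ht hst) 2) (pow_nonneg (hp t ht).le 2)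
    (rpow_nonneg (by linarith [hs.2]) b)

theorem continuousOn_rpow_div_one_sub_rpow_mul_sq {a : ℝ} (b : ℝ)
    (hp : ∀ s ∈ Ico (0:ℝ) 1, 0 < p s) (ha : 0 ≤ a)
    (hpc : ContinuousOn p (Ico 0 1)) :
    ContinuousOn (fun s => s ^ a / ((1 - s) ^ b * p s ^ 2)) (Ico 0 1) := by
  refine (continuous_rpow_const ha).continuousOn.div (ContinuousOn.mul ?_ (hpc.pow 2))
    fun s hs => (one_sub_rpow_mul_sq_pos b hp hs).ne'
  exact fun s hs => ((continuousAt_const.sub continuousAt_id).rpow_const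
    (Or.inl (sub_pos.2 hs.2).ne')).continuousWithinAt

end Weight

theorem qfun_div_self {p : ℝ → ℝ} {M : ℝ} (a b : ℝ) (hpM : p M ≠ 0) :
    qfun p a b M / p M = (∫ s in (0:ℝ)..M, s ^ a / ((1 - s) ^ b * p s ^ 2)) / M := by
  unfold qfun
  field_simp

theorem f_deriv_lower_bound_general (a b : ℝ) (ha : 1 ≤ a) (hb : 1 ≤ b)
    (p : ℝ → ℝ) (hpc : ContinuousOn p (Icc 0 1))
    (hpa : AntitoneOn p (Icc 0 1))
    (hppos : ∀ M ∈ Ico (0:ℝ) 1, 0 < p M) :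
    ContDiffOn ℝ 1 (fun M => Real.sqrt (qfun p a b M / p M)) (Ioo (0:ℝ) 1) ∧
    ∀ M ∈ Ioo (0:ℝ) 1,
      a / (2 * M) * Real.sqrt (qfun p a b M / p M) ≤
        deriv (fun M => Real.sqrt (qfun p a b M / p M)) M := by
  set g : ℝ → ℝ := fun s => s ^ a / ((1 - s) ^ b * p s ^ 2)
  have hg : ContinuousOn g (Ico 0 1) := continuousOn_rpow_div_one_sub_rpow_mul_sq b hppos
    (by linarith) (hpc.mono Ico_subset_Icc_self)
  have hgpos : ∀ s ∈ Ioo 0 1, 0 < g s := fun s hs =>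
    div_pos (rpow_pos_of_pos hs.1 a) (one_sub_rpow_mul_sq_pos b hppos (Ioo_subset_Ico_self hs))
  have hf : EqOn (fun M => √(qfun p a b M / p M)) (fun M => √((∫ s in (0:ℝ)..M, g s) / M))
      (Ioo 0 1) := fun M hM => by
    simp only [qfun_div_self a b (hppos M (Ioo_subset_Ico_self hM)).ne', g]
  refine ⟨(contDiffOn_sqrt_integral_div hg hgpos).congr hf, fun M hM => ?_⟩
  rw [(hf.eventuallyEq_of_mem (isOpen_Ioo.mem_nhds hM)).deriv_eq,
    show √(qfun p a b M / p M) = _ from hf hM]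
  refine le_deriv_sqrt_integral_div hg hgpos hM ?_
  exact add_one_mul_integral_rpow_div_le (by linarith) hM.1
    ((antitoneOn_one_sub_rpow_mul_sq hppos (by linarith) (hpa.mono Ico_subset_Icc_self)).mono
      (Icc_subset_Ico_right hM.2))
    (one_sub_rpow_mul_sq_pos b hppos (Ioo_subset_Ico_self hM))
    ((hg.mono (Icc_subset_Ico_right hM.2)).intervalIntegrable_of_Icc hM.1.le)

/-- The function `f(M) = √(q(M)/p(M))` is continuously differentiable on `(0,1)`
and satisfies `f′(M) ≥ (a/(2M)) f(M)` there. -/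
theorem f_deriv_lower_bound (a b : ℝ) (ha : 1 ≤ a) (hb : 1 ≤ b)
    (p : ℝ → ℝ) (hpc : ContinuousOn p (Icc 0 1))
    (hpa : AntitoneOn p (Icc 0 1)) (hp1 : p 1 = 0)
    (hppos : ∀ M ∈ Ico (0:ℝ) 1, 0 < p M) :
    ContDiffOn ℝ 1 (fun M => Real.sqrt (qfun p a b M / p M)) (Ioo (0:ℝ) 1) ∧
    ∀ M ∈ Ioo (0:ℝ) 1,
      a / (2 * M) * Real.sqrt (qfun p a b M / p M) ≤
        deriv (fun M => Real.sqrt (qfun p a b M / p M)) M :=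
  f_deriv_lower_bound_general a b ha hb p hpc hpa hppos
end

section
/- There exists a constant C₃ > 0, depending only on p, a, b and κ, with the following property: for every integer n ≥ 1 and all vectors u, v ∈ [0,∞)ⁿ with M_u := Σᵢ uᵢ ∈ (0,1), M_v := Σᵢ vᵢ ∈ (0,1) and M_u ≠ M_v, there exists a point M_σ strictly between M_u and M_v such that, setting f(M) = √(q(M)/p(M)) and p_σ² = (p(M_u)² + p(M_v)²)/2, one has Σᵢ₌₁ⁿ p_σ² (√(vᵢ) f(M_v) − √(uᵢ) f(M_u))² ≥ (1/2)·min{p(M_u)q(M_u), p(M_v)q(M_v)} · Σᵢ₌₁ⁿ (√(vᵢ) − √(uᵢ))² + C₃ · M_σ^(a−1) (M_v − M_u)² / (1−M_σ)^(1+b+κ). -/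
/-!
Write `h(s) = s^a / ((1-s)^b p(s)^2)` and `g = q/p = (1/M) ∫₀^M h`, so that `f = √g`.
Expanding `√vᵢ B - √uᵢ A` around `(A+B)/2` and `(B-A)/2` (with `A = f(M_u)`, `B = f(M_v)`)
leaves, besides a cross term that is nonnegative because `f` is increasing,
`((A+B)/2)² Σ (√vᵢ - √uᵢ)²`, which dominates the `min` term, and `((B-A)/2)² Σ (√vᵢ + √uᵢ)²`,
where `Σ (√vᵢ + √uᵢ)² ≥ max(M_u, M_v) ≥ M_σ`. By the mean value theorem
`B - A = f'(M_σ)(M_v - M_u)`, and `p² f'² ≳ M^(a-2) / (1-M)^(1+b+κ)` on `(0,1)`: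
`g' = (h - g)/M ≥ h/(4M)` because `h` is increasing with `h(M/2) ≤ h(M)/2`, and
`h/g ≳ (1-M)^-(1+κ)` because near `1` the hypothesis on `p'/p` makes `h` grow so fast that
`∫₀^M h ≲ h(M) (1-M)^(1+κ)`.
-/

open Real Set MeasureTheory

open Filter Topology

theorem integral_le_three_fourths_mul_of_monotoneOn {h : ℝ → ℝ} {M : ℝ} (hM : 0 ≤ M)
    (hmono : MonotoneOn h (Icc 0 M)) (hhalf : h (M / 2) ≤ h M / 2) :
    ∫ x in 0..M, h x ≤ 3 / 4 * M * h M := by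
  have hint : ∀ x y, 0 ≤ x → x ≤ y → y ≤ M → IntervalIntegrable h volume x y :=
    fun x y hx hxy hy =>
      (hmono.mono (by rw [uIcc_of_le hxy]; exact Icc_subset_Icc hx hy)).intervalIntegrable
  have hint₁ := hint 0 (M / 2) le_rfl (by linarith) (by linarith)
  have hint₂ := hint (M / 2) M (by linarith) (by linarith) le_rfl
  have hlower : ∫ x in 0..M / 2, h x ≤ M / 2 * h (M / 2) := by
    simpa using intervalIntegral.integral_mono_on (by linarith) hint₁ intervalIntegrable_const
      (fun x hx => hmono ⟨hx.1, by linarith [hx.2]⟩ ⟨by linarith, by linarith⟩ hx.2)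
  have hupper : ∫ x in M / 2..M, h x ≤ M / 2 * h M := by
    have := intervalIntegral.integral_mono_on (by linarith) hint₂ intervalIntegrable_const
      (fun x hx => hmono ⟨by linarith [hx.1], hx.2⟩ ⟨hM, le_rfl⟩ hx.2)
    rw [intervalIntegral.integral_const, smul_eq_mul] at this
    linarith
  rw [← intervalIntegral.integral_add_adjacent_intervals hint₁ hint₂]
  nlinarith

theorem exists_mem_Ioo_min_max_sub_eq_mul {f f' : ℝ → ℝ} {x y : ℝ} (hxy : x ≠ y)
    (hf : ∀ z ∈ uIcc x y, HasDerivAt f (f' z) z) :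
    ∃ σ ∈ Ioo (min x y) (max x y), f y - f x = f' σ * (y - x) := by
  obtain ⟨σ, hσ, hslope⟩ := exists_hasDerivAt_eq_slope f f' (min_lt_max.mpr hxy)
    (fun z hz => (hf z hz).continuousAt.continuousWithinAt)
    (fun z hz => hf z (Ioo_subset_Icc_self hz))
  refine ⟨σ, hσ, ?_⟩
  rcases hxy.lt_or_gt with h | h
  · rw [hslope, min_eq_left h.le, max_eq_right h.le, div_mul_cancel₀ _ (sub_ne_zero.mpr h.ne')]
  · rw [hslope, min_eq_right h.le, max_eq_left h.le, ← neg_sub x y, mul_neg,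
      div_mul_cancel₀ _ (sub_ne_zero.mpr h.ne'), neg_sub]

theorem min_sq_mul_sq_le {x y A B : ℝ} (hA : 0 ≤ A) (hB : 0 ≤ B) :
    min (x ^ 2 * A ^ 2) (y ^ 2 * B ^ 2) ≤ (x ^ 2 + y ^ 2) / 2 * ((A + B) / 2) ^ 2 := by
  have hmin : min (x ^ 2 * A ^ 2) (y ^ 2 * B ^ 2) ≤ |x| * A * (|y| * B) := by
    rcases le_total (|x| * A) (|y| * B) with h | h
    · refine (min_le_left _ _).trans ?_
      nlinarith [sq_abs x, abs_nonneg x, mul_nonneg (abs_nonneg x) hA]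
    · refine (min_le_right _ _).trans ?_
      nlinarith [sq_abs y, abs_nonneg y, mul_nonneg (abs_nonneg y) hB]
  nlinarith [sq_abs x, sq_abs y, sq_nonneg (|x| - |y|), sq_nonneg (A - B), mul_nonneg hA hB,
    mul_nonneg (abs_nonneg x) (abs_nonneg y)]

theorem sum_sq_sqrt_mul_sub_ge {ι : Type*} (s : Finset ι) {u v : ι → ℝ}
    (hu : ∀ i ∈ s, 0 ≤ u i) (hv : ∀ i ∈ s, 0 ≤ v i) {A B : ℝ} (hA : 0 ≤ A) (hB : 0 ≤ B)
    (hmono : 0 ≤ (B - A) * (∑ i ∈ s, v i - ∑ i ∈ s, u i)) :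
    ((A + B) / 2) ^ 2 * ∑ i ∈ s, (√(v i) - √(u i)) ^ 2 +
        ((B - A) / 2) ^ 2 * max (∑ i ∈ s, u i) (∑ i ∈ s, v i) ≤
      ∑ i ∈ s, (√(v i) * B - √(u i) * A) ^ 2 := by
  have hterm : ∀ i ∈ s, (√(v i) * B - √(u i) * A) ^ 2 =
      ((A + B) / 2) ^ 2 * (√(v i) - √(u i)) ^ 2 + ((B - A) / 2) ^ 2 * (√(v i) + √(u i)) ^ 2 +
        (B ^ 2 - A ^ 2) / 2 * (v i - u i) := fun i hi => by
    linear_combination (B ^ 2 - A ^ 2) / 2 * (sq_sqrt (hv i hi) - sq_sqrt (hu i hi))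
  have hmax : max (∑ i ∈ s, u i) (∑ i ∈ s, v i) ≤ ∑ i ∈ s, (√(v i) + √(u i)) ^ 2 := by
    refine max_le (Finset.sum_le_sum fun i hi => ?_) (Finset.sum_le_sum fun i hi => ?_)
    · nlinarith [sq_sqrt (hu i hi), sqrt_nonneg (u i), sqrt_nonneg (v i)]
    · nlinarith [sq_sqrt (hv i hi), sqrt_nonneg (u i), sqrt_nonneg (v i)]
  rw [Finset.sum_congr rfl hterm, Finset.sum_add_distrib, Finset.sum_add_distrib,
    ← Finset.mul_sum, ← Finset.mul_sum, ← Finset.mul_sum, Finset.sum_sub_distrib]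
  nlinarith [mul_le_mul_of_nonneg_left hmax (sq_nonneg ((B - A) / 2)), add_nonneg hA hB]

theorem half_min_mul_sum_add_le_sum {ι : Type*} (s : Finset ι) {u v : ι → ℝ}
    (hu : ∀ i ∈ s, 0 ≤ u i) (hv : ∀ i ∈ s, 0 ≤ v i) {x y A B E : ℝ} (hA : 0 ≤ A) (hB : 0 ≤ B)
    (hmono : 0 ≤ (B - A) * (∑ i ∈ s, v i - ∑ i ∈ s, u i))
    (hE : E ≤ (x ^ 2 + y ^ 2) / 2 * (((B - A) / 2) ^ 2 * max (∑ i ∈ s, u i) (∑ i ∈ s, v i))) :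
    1 / 2 * min (x ^ 2 * A ^ 2) (y ^ 2 * B ^ 2) * ∑ i ∈ s, (√(v i) - √(u i)) ^ 2 + E ≤
      ∑ i ∈ s, (x ^ 2 + y ^ 2) / 2 * (√(v i) * B - √(u i) * A) ^ 2 := by
  have hS : 0 ≤ ∑ i ∈ s, (√(v i) - √(u i)) ^ 2 := Finset.sum_nonneg fun i _ => sq_nonneg _
  have hmin := min_sq_mul_sq_le (x := x) (y := y) hA hB
  have hmin0 : 0 ≤ min (x ^ 2 * A ^ 2) (y ^ 2 * B ^ 2) := le_min (by positivity) (by positivity)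
  rw [← Finset.mul_sum]
  calc _ ≤ (x ^ 2 + y ^ 2) / 2 * (((A + B) / 2) ^ 2 * ∑ i ∈ s, (√(v i) - √(u i)) ^ 2 +
        ((B - A) / 2) ^ 2 * max (∑ i ∈ s, u i) (∑ i ∈ s, v i)) := by
        rw [mul_add, ← mul_assoc]
        exact add_le_add (mul_le_mul_of_nonneg_right (by linarith) hS) hE
    _ ≤ _ := mul_le_mul_of_nonneg_left (sum_sq_sqrt_mul_sub_ge s hu hv hA hB hmono) (by positivity)

theorem le_mul_of_hasDerivAt_le_mul {F w F' w' : ℝ → ℝ} {x₀ x C : ℝ} (hx : x₀ ≤ x)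
    (hF : ∀ y ∈ Icc x₀ x, HasDerivAt F (F' y) y) (hw : ∀ y ∈ Icc x₀ x, HasDerivAt w (w' y) y)
    (hle : ∀ y ∈ Icc x₀ x, F' y ≤ C * w' y) (h₀ : F x₀ ≤ C * w x₀) : F x ≤ C * w x := by
  have hG : ∀ y ∈ Icc x₀ x, HasDerivAt (fun y => F y - C * w y) (F' y - C * w' y) y :=
    fun y hy => (hF y hy).sub ((hw y hy).const_mul C)
  have hanti : AntitoneOn (fun y => F y - C * w y) (Icc x₀ x) :=
    antitoneOn_of_hasDerivWithinAt_nonpos (convex_Icc _ _)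
      (fun y hy => (hG y hy).continuousAt.continuousWithinAt)
      (fun y hy => (hG y (interior_subset hy)).hasDerivWithinAt)
      (fun y hy => sub_nonpos.mpr (hle y (interior_subset hy)))
  linarith [hanti ⟨le_rfl, hx⟩ ⟨hx, le_rfl⟩ hx]

theorem eventually_le_mul_one_sub_rpow {F h h' : ℝ → ℝ} {c κ : ℝ} (hc : 0 < c) (hκ : 0 < κ)
    (hF : ∀ᶠ x in 𝓝[<] 1, HasDerivAt F (h x) x)
    (hh : ∀ᶠ x in 𝓝[<] 1, HasDerivAt h (h' x) x)
    (hpos : ∀ᶠ x in 𝓝[<] 1, 0 < h x)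
    (hgrowth : ∀ᶠ x in 𝓝[<] 1, c * h x ≤ (1 - x) ^ (1 + κ) * h' x) :
    ∃ C > 0, ∀ᶠ x in 𝓝[<] 1, F x ≤ C * (h x * (1 - x) ^ (1 + κ)) := by
  have hsmall : ∀ᶠ x in 𝓝[<] (1 : ℝ), (1 + κ) * (1 - x) ^ κ ≤ c / 2 := by
    have hlim : Tendsto (fun x : ℝ => (1 + κ) * (1 - x) ^ κ) (𝓝[<] 1) (𝓝 0) := by
      have := ((continuous_const.sub continuous_id).rpow_const (f := fun x : ℝ => 1 - x)
        fun _ => Or.inr hκ.le).tendsto 1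
      simpa [zero_rpow hκ.ne'] using (this.const_mul (1 + κ)).mono_left nhdsWithin_le_nhds
    exact hlim.eventually_le_const (half_pos hc)
  obtain ⟨l, hl, hsub⟩ := mem_nhdsLT_iff_exists_Ioo_subset.mp
    (hF.and (hh.and (hpos.and (hgrowth.and hsmall))))
  obtain ⟨x₀, hx₀⟩ := nonempty_Ioo.mpr (mem_Iio.mp hl)
  set w : ℝ → ℝ := fun x => h x * (1 - x) ^ (1 + κ)
  set w' : ℝ → ℝ := fun x => h' x * (1 - x) ^ (1 + κ) - (1 + κ) * (1 - x) ^ κ * h x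
  have hw₀ : 0 < w x₀ := mul_pos (hsub hx₀).2.2.1 (rpow_pos_of_pos (by linarith [hx₀.2]) _)
  have hw' : ∀ x ∈ Ioo l 1, HasDerivAt w (w' x) x ∧ c / 2 * h x ≤ w' x := by
    intro x hx
    obtain ⟨-, hhx, hposx, hgrowthx, hsmallx⟩ := hsub hx
    refine ⟨?_, by nlinarith⟩
    have hd := hhx.fun_mul (((hasDerivAt_id' x).const_sub 1).rpow_const (p := 1 + κ)
      (Or.inr (by linarith)))
    rw [add_sub_cancel_left] at hd
    exact hd.congr_deriv (by ring)
  -- `C ≥ 2 / c` gives `h ≤ C w'` on `(l, 1)`, and the second summand gives `F x₀ ≤ C w x₀`.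
  set C := 2 / c + |F x₀| / w x₀
  have hC : 2 / c ≤ C := le_add_of_nonneg_right (by positivity)
  refine ⟨C, by positivity, ?_⟩
  filter_upwards [Ioo_mem_nhdsLT hx₀.2] with x hx
  have hIcc : Icc x₀ x ⊆ Ioo l 1 :=
    fun y hy => ⟨by linarith [hx₀.1, hy.1], by linarith [hy.2, hx.2]⟩
  refine le_mul_of_hasDerivAt_le_mul hx.1.le (fun y hy => (hsub (hIcc hy)).1)
    (fun y hy => (hw' y (hIcc hy)).1) (fun y hy => ?_) ?_
  · have hhy := (hsub (hIcc hy)).2.2.1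
    calc h y = 2 / c * (c / 2 * h y) := by field_simp
      _ ≤ C * (c / 2 * h y) := mul_le_mul_of_nonneg_right hC (by positivity)
      _ ≤ C * w' y := mul_le_mul_of_nonneg_left (hw' y (hIcc hy)).2 (by positivity)
  · rw [add_mul, div_mul_cancel₀ _ hw₀.ne']
    linarith [le_abs_self (F x₀), mul_pos (div_pos two_pos hc) hw₀]

noncomputable def weight (p : ℝ → ℝ) (a b s : ℝ) : ℝ := s ^ a / ((1 - s) ^ b * p s ^ 2)

-- `qfun = p · weightAvg`, so the function `f` of the paper is `√weightAvg`.
noncomputable def weightAvg (p : ℝ → ℝ) (a b M : ℝ) : ℝ := (∫ s in 0..M, weight p a b s) / M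

section Weight

variable {p p' : ℝ → ℝ} {a b M : ℝ}

theorem qfun_eq_mul_weightAvg : qfun p a b M = p M * weightAvg p a b M := by
  simp only [qfun, weightAvg, weight]
  ring

theorem weight_pos (hp : ∀ s ∈ Ico (0 : ℝ) 1, 0 < p s) (hM : M ∈ Ioo 0 1) :
    0 < weight p a b M := by
  have := hp M ⟨hM.1.le, hM.2⟩
  have := sub_pos.mpr hM.2
  have := hM.1
  unfold weight
  positivity

theorem monotoneOn_weight (ha : 0 ≤ a) (hb : 0 ≤ b) (hpa : AntitoneOn p (Ico 0 1))
    (hp : ∀ s ∈ Ico (0 : ℝ) 1, 0 < p s) : MonotoneOn (weight p a b) (Ico 0 1) := by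
  intro s hs t ht hst
  have hps := hp s hs
  have hpt := hp t ht
  have hpts := hpa hs ht hst
  have h1t := sub_pos.mpr ht.2
  exact div_le_div₀ (rpow_nonneg (hs.1.trans hst) a) (rpow_le_rpow hs.1 hst ha)
    (mul_pos (rpow_pos_of_pos h1t b) (pow_pos hpt 2))
    (mul_le_mul (rpow_le_rpow h1t.le (by linarith) hb) (by nlinarith) (by positivity)
      (rpow_nonneg (by linarith [hs.2]) b))

theorem weight_half_le (ha : 1 ≤ a) (hb : 0 ≤ b) (hpa : AntitoneOn p (Ico 0 1))
    (hp : ∀ s ∈ Ico (0 : ℝ) 1, 0 < p s) (hM : M ∈ Ico 0 1) :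
    weight p a b (M / 2) ≤ weight p a b M / 2 := by
  have hM2 : M / 2 ∈ Ico (0 : ℝ) 1 := ⟨by linarith [hM.1], by linarith [hM.1, hM.2]⟩
  have hpM := hp M hM
  have hpM2 := hp _ hM2
  have hp_le := hpa hM2 hM (by linarith [hM.1])
  have h1M := sub_pos.mpr hM.2
  have hpow : (M / 2) ^ a ≤ M ^ a / 2 := by
    rw [div_rpow hM.1 zero_le_two]
    exact div_le_div_of_nonneg_left (rpow_nonneg hM.1 a) two_pos
      (by simpa using rpow_le_rpow_of_exponent_le one_le_two ha)
  rw [weight, weight, div_right_comm]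
  exact div_le_div₀ (div_nonneg (rpow_nonneg hM.1 a) zero_le_two) hpow
    (mul_pos (rpow_pos_of_pos h1M b) (pow_pos hpM 2))
    (mul_le_mul (rpow_le_rpow h1M.le (by linarith [hM.1]) hb) (by nlinarith) (by positivity)
      (rpow_nonneg (by linarith [hM2.2]) b))

theorem hasDerivAt_weight (hp : p M ≠ 0) (hp' : HasDerivAt p (p' M) M) (hM : M ∈ Ioo 0 1) :
    HasDerivAt (weight p a b) (weight p a b M * (a / M + b / (1 - M) - 2 * p' M / p M)) M := by
  have h1M : 1 - M ≠ 0 := (sub_pos.mpr hM.2).ne'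
  have hnum := hasDerivAt_rpow_const (p := a) (Or.inl hM.1.ne')
  have hden := (((hasDerivAt_id' M).const_sub 1).rpow_const (p := b) (Or.inl h1M)).fun_mul
    (hp'.fun_pow 2)
  refine (hnum.div hden (mul_ne_zero (rpow_pos_of_pos (sub_pos.mpr hM.2) b).ne'
    (pow_ne_zero 2 hp))).congr_deriv ?_
  rw [weight, rpow_sub_one hM.1.ne', rpow_sub_one h1M]
  field_simp
  ring

theorem continuousOn_weight (ha : 0 ≤ a) (hpc : ContinuousOn p (Ico 0 1))
    (hp : ∀ s ∈ Ico (0 : ℝ) 1, 0 < p s) : ContinuousOn (weight p a b) (Ico 0 1) :=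
  (continuousOn_id.rpow_const fun _ _ => Or.inr ha).div
    (((continuousOn_const.sub continuousOn_id).rpow_const
      fun _ hs => Or.inl (sub_pos.mpr hs.2).ne').mul (hpc.pow 2))
    fun s hs => (mul_pos (rpow_pos_of_pos (sub_pos.mpr hs.2) b) (pow_pos (hp s hs) 2)).ne'

theorem intervalIntegrable_weight (ha : 0 ≤ a) (hpc : ContinuousOn p (Ico 0 1))
    (hp : ∀ s ∈ Ico (0 : ℝ) 1, 0 < p s) (hM : M ∈ Ico 0 1) :
    IntervalIntegrable (weight p a b) volume 0 M :=
  ((continuousOn_weight ha hpc hp).mono fun s hs => by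
    rw [uIcc_of_le hM.1] at hs
    exact ⟨hs.1, hs.2.trans_lt hM.2⟩).intervalIntegrable

theorem hasDerivAt_integral_weight (ha : 0 ≤ a) (hpc : ContinuousOn p (Ico 0 1))
    (hp : ∀ s ∈ Ico (0 : ℝ) 1, 0 < p s) (hM : M ∈ Ioo 0 1) :
    HasDerivAt (fun M => ∫ s in 0..M, weight p a b s) (weight p a b M) M :=
  intervalIntegral.integral_hasDerivAt_right (intervalIntegrable_weight ha hpc hp ⟨hM.1.le, hM.2⟩)
    (((continuousOn_weight ha hpc hp).mono Ioo_subset_Ico_self).stronglyMeasurableAtFilter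
      isOpen_Ioo M hM)
    ((continuousOn_weight ha hpc hp).continuousAt (Ico_mem_nhds hM.1 hM.2))

theorem weightAvg_pos (ha : 0 ≤ a) (hpc : ContinuousOn p (Ico 0 1))
    (hp : ∀ s ∈ Ico (0 : ℝ) 1, 0 < p s) (hM : M ∈ Ioo 0 1) : 0 < weightAvg p a b M :=
  div_pos (intervalIntegral.intervalIntegral_pos_of_pos_on
    (intervalIntegrable_weight ha hpc hp ⟨hM.1.le, hM.2⟩)
    (fun _ hs => weight_pos hp ⟨hs.1, hs.2.trans hM.2⟩) hM.1) hM.1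

theorem weightAvg_le (ha : 1 ≤ a) (hb : 0 ≤ b) (hpa : AntitoneOn p (Ico 0 1))
    (hp : ∀ s ∈ Ico (0 : ℝ) 1, 0 < p s) (hM : M ∈ Ioo 0 1) :
    weightAvg p a b M ≤ 3 / 4 * weight p a b M := by
  rw [weightAvg, div_le_iff₀ hM.1, mul_right_comm]
  exact integral_le_three_fourths_mul_of_monotoneOn hM.1.le
    ((monotoneOn_weight (by linarith) hb hpa hp).mono fun s hs => ⟨hs.1, hs.2.trans_lt hM.2⟩)
    (weight_half_le ha hb hpa hp ⟨hM.1.le, hM.2⟩)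

theorem hasDerivAt_weightAvg (ha : 0 ≤ a) (hpc : ContinuousOn p (Ico 0 1))
    (hp : ∀ s ∈ Ico (0 : ℝ) 1, 0 < p s) (hM : M ∈ Ioo 0 1) :
    HasDerivAt (weightAvg p a b) ((weight p a b M - weightAvg p a b M) / M) M := by
  refine ((hasDerivAt_integral_weight ha hpc hp hM).div (hasDerivAt_id' M)
    hM.1.ne').congr_deriv ?_
  have := hM.1.ne'
  rw [weightAvg]
  field_simp

theorem hasDerivAt_sqrt_weightAvg (ha : 0 ≤ a) (hpc : ContinuousOn p (Ico 0 1))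
    (hp : ∀ s ∈ Ico (0 : ℝ) 1, 0 < p s) (hM : M ∈ Ioo 0 1) :
    HasDerivAt (fun M => √(weightAvg p a b M))
      ((weight p a b M - weightAvg p a b M) / M / (2 * √(weightAvg p a b M))) M :=
  (hasDerivAt_weightAvg ha hpc hp hM).sqrt (weightAvg_pos ha hpc hp hM).ne'

theorem eventually_mul_weight_le_mul_deriv_weight (ha : 0 ≤ a) (hb : 0 ≤ b)
    (hp : ∀ s ∈ Ico (0 : ℝ) 1, 0 < p s) {κ c : ℝ} (hc : 0 < c)
    (hlim : Tendsto (fun M => -((1 - M) ^ (1 + κ) * p' M / p M)) (𝓝[<] 1) (𝓝 c)) :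
    ∀ᶠ M in 𝓝[<] (1 : ℝ), c * weight p a b M ≤
      (1 - M) ^ (1 + κ) * (weight p a b M * (a / M + b / (1 - M) - 2 * p' M / p M)) := by
  filter_upwards [Ioo_mem_nhdsLT zero_lt_one, hlim.eventually_const_le (half_lt_self hc)]
    with M hM hcM
  have hM0 := hM.1
  have h1M := sub_pos.mpr hM.2
  have hlog : 0 ≤ (1 - M) ^ (1 + κ) * (a / M + b / (1 - M)) := by positivity
  have hw := weight_pos (a := a) (b := b) hp hM
  rw [show (1 - M) ^ (1 + κ) * (weight p a b M * (a / M + b / (1 - M) - 2 * p' M / p M)) =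
    weight p a b M * ((1 - M) ^ (1 + κ) * (a / M + b / (1 - M)) +
      2 * -((1 - M) ^ (1 + κ) * p' M / p M)) by ring]
  nlinarith

theorem exists_pos_mul_weightAvg_le (ha : 1 ≤ a) (hb : 0 ≤ b) (hpa : AntitoneOn p (Ico 0 1))
    (hp : ∀ s ∈ Ico (0 : ℝ) 1, 0 < p s) (hpc : ContinuousOn p (Ico 0 1))
    (hp' : ∀ M ∈ Ioo (0 : ℝ) 1, HasDerivAt p (p' M) M) {κ c : ℝ} (hκ : 0 < κ) (hc : 0 < c)
    (hlim : Tendsto (fun M => -((1 - M) ^ (1 + κ) * p' M / p M)) (𝓝[<] 1) (𝓝 c)) :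
    ∃ K > 0, ∀ M ∈ Ioo (0 : ℝ) 1,
      K * weightAvg p a b M ≤ weight p a b M * (1 - M) ^ (1 + κ) := by
  have hnear : ∀ᶠ M in 𝓝[<] (1 : ℝ), M ∈ Ioo (1 / 2) 1 := Ioo_mem_nhdsLT one_half_lt_one
  have hmem : ∀ {M : ℝ}, M ∈ Ioo (1 / 2) 1 → M ∈ Ioo (0 : ℝ) 1 :=
    fun hM => ⟨by linarith [hM.1], hM.2⟩
  obtain ⟨C, hC, htail⟩ := eventually_le_mul_one_sub_rpow hc hκ
    (hnear.mono fun M hM => hasDerivAt_integral_weight (by linarith) hpc hp (hmem hM))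
    (hnear.mono fun M hM => hasDerivAt_weight (hp M ⟨(hmem hM).1.le, hM.2⟩).ne'
      (hp' M (hmem hM)) (hmem hM))
    (hnear.mono fun M hM => weight_pos hp (hmem hM))
    (eventually_mul_weight_le_mul_deriv_weight (a := a) (by linarith) hb hp hc hlim)
  obtain ⟨l, hl, hsub⟩ := mem_nhdsLT_iff_exists_Ioo_subset.mp (hnear.and htail)
  have h1l : 0 < 1 - l := sub_pos.mpr hl
  refine ⟨min ((1 - l) ^ (1 + κ)) (1 / (2 * C)), by positivity, fun M hM => ?_⟩
  have hg := weightAvg_pos (a := a) (b := b) (by linarith) hpc hp hM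
  have hgw := weightAvg_le ha hb hpa hp hM
  have hw := weight_pos (a := a) (b := b) hp hM
  have h1M := sub_pos.mpr hM.2
  rcases le_or_gt M l with hMl | hMl
  · calc min ((1 - l) ^ (1 + κ)) (1 / (2 * C)) * weightAvg p a b M
        ≤ (1 - l) ^ (1 + κ) * weightAvg p a b M := by gcongr; exact min_le_left _ _
      _ ≤ (1 - M) ^ (1 + κ) * weight p a b M := by
        gcongr
        · linarith
      _ = weight p a b M * (1 - M) ^ (1 + κ) := mul_comm _ _
  · obtain ⟨⟨hM2, -⟩, hF⟩ := hsub ⟨hMl, hM.2⟩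
    calc min ((1 - l) ^ (1 + κ)) (1 / (2 * C)) * weightAvg p a b M
        ≤ 1 / (2 * C) * weightAvg p a b M := by gcongr; exact min_le_right _ _
      _ ≤ 1 / (2 * C) * (2 * (C * (weight p a b M * (1 - M) ^ (1 + κ)))) := by
        gcongr
        rw [weightAvg, div_le_iff₀ hM.1]
        have := rpow_pos_of_pos h1M (1 + κ)
        nlinarith [mul_pos hC (mul_pos hw this)]
      _ = weight p a b M * (1 - M) ^ (1 + κ) := by field_simp

theorem exists_pos_le_mul_sq_deriv_sqrt_weightAvg (ha : 1 ≤ a) (hb : 0 ≤ b)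
    (hpa : AntitoneOn p (Ico 0 1)) (hp : ∀ s ∈ Ico (0 : ℝ) 1, 0 < p s)
    (hpc : ContinuousOn p (Ico 0 1)) (hp' : ∀ M ∈ Ioo (0 : ℝ) 1, HasDerivAt p (p' M) M)
    {κ c : ℝ} (hκ : 0 < κ) (hc : 0 < c)
    (hlim : Tendsto (fun M => -((1 - M) ^ (1 + κ) * p' M / p M)) (𝓝[<] 1) (𝓝 c)) :
    ∃ C₀ > 0, ∀ M ∈ Ioo (0 : ℝ) 1, C₀ * M ^ (a - 1) / (1 - M) ^ (1 + b + κ) ≤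
      M * p M ^ 2 * deriv (fun M => √(weightAvg p a b M)) M ^ 2 := by
  obtain ⟨K, hK, hKle⟩ := exists_pos_mul_weightAvg_le ha hb hpa hp hpc hp' hκ hc hlim
  refine ⟨K / 64, by positivity, fun M hM => ?_⟩
  rw [(hasDerivAt_sqrt_weightAvg (by linarith) hpc hp hM).deriv]
  have hg := weightAvg_pos (a := a) (b := b) (by linarith) hpc hp hM
  have hgw := weightAvg_le ha hb hpa hp hM
  have hKM := hKle M hM
  have hw := weight_pos (a := a) (b := b) hp hM
  have hpM := hp M ⟨hM.1.le, hM.2⟩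
  have hM0 := hM.1
  have h1M := sub_pos.mpr hM.2
  have hE := rpow_pos_of_pos h1M (1 + κ)
  set w := weight p a b M with hw_def
  set g := weightAvg p a b M
  have hpw : M ^ (a - 1) / (1 - M) ^ (1 + b + κ) = p M ^ 2 / M * (w / (1 - M) ^ (1 + κ)) := by
    rw [rpow_sub_one hM.1.ne', add_right_comm, rpow_add h1M, hw_def, weight]
    field_simp
  calc K / 64 * M ^ (a - 1) / (1 - M) ^ (1 + b + κ)
      = p M ^ 2 / M * (K * w / (64 * (1 - M) ^ (1 + κ))) := by
        rw [mul_div_assoc, hpw]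
        ring
    _ ≤ p M ^ 2 / M * (w ^ 2 / (64 * g)) := by
        refine mul_le_mul_of_nonneg_left ?_ (by positivity)
        rw [div_le_div_iff₀ (by positivity) (by positivity)]
        nlinarith [mul_le_mul_of_nonneg_left hKM hw.le]
    _ ≤ p M ^ 2 / M * ((w - g) ^ 2 / (4 * g)) := by
        refine mul_le_mul_of_nonneg_left ?_ (by positivity)
        have hwg : w / 4 ≤ w - g := by linarith
        rw [div_le_div_iff₀ (by positivity) (by positivity)]
        nlinarith [mul_le_mul hwg hwg (by positivity) (by linarith)]
    _ = M * p M ^ 2 * ((w - g) / M / (2 * √g)) ^ 2 := by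
        rw [div_pow, mul_pow, sq_sqrt hg.le]
        field_simp
        ring

theorem deriv_sqrt_weightAvg_nonneg (ha : 1 ≤ a) (hb : 0 ≤ b) (hpa : AntitoneOn p (Ico 0 1))
    (hp : ∀ s ∈ Ico (0 : ℝ) 1, 0 < p s) (hpc : ContinuousOn p (Ico 0 1)) (hM : M ∈ Ioo 0 1) :
    0 ≤ deriv (fun M => √(weightAvg p a b M)) M := by
  rw [(hasDerivAt_sqrt_weightAvg (by linarith) hpc hp hM).deriv]
  have := weightAvg_le ha hb hpa hp hM
  have := weight_pos (a := a) (b := b) hp hM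
  have := hM.1
  exact div_nonneg (div_nonneg (by linarith) this.le) (by positivity)

theorem sqrt_qfun_div_eq (hp : p M ≠ 0) : √(qfun p a b M / p M) = √(weightAvg p a b M) := by
  rw [qfun_eq_mul_weightAvg, mul_div_cancel_left₀ _ hp]

theorem mul_qfun_eq (hg : 0 ≤ weightAvg p a b M) :
    p M * qfun p a b M = p M ^ 2 * √(weightAvg p a b M) ^ 2 := by
  rw [qfun_eq_mul_weightAvg, sq_sqrt hg]
  ring

theorem exists_edge_lower_bound_weightAvg (ha : 1 ≤ a) (hb : 0 ≤ b)
    (hpa : AntitoneOn p (Ico 0 1)) (hp : ∀ s ∈ Ico (0 : ℝ) 1, 0 < p s)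
    (hpc : ContinuousOn p (Ico 0 1)) {C₀ κ : ℝ}
    (hC₀ : ∀ M ∈ Ioo (0 : ℝ) 1, C₀ * M ^ (a - 1) / (1 - M) ^ (1 + b + κ) ≤
      M * p M ^ 2 * deriv (fun M => √(weightAvg p a b M)) M ^ 2)
    {ι : Type*} (s : Finset ι) {u v : ι → ℝ} (hu : ∀ i ∈ s, 0 ≤ u i) (hv : ∀ i ∈ s, 0 ≤ v i)
    (hMu : ∑ i ∈ s, u i ∈ Ioo (0 : ℝ) 1) (hMv : ∑ i ∈ s, v i ∈ Ioo (0 : ℝ) 1)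
    (hne : ∑ i ∈ s, u i ≠ ∑ i ∈ s, v i) :
    ∃ σ ∈ Ioo (min (∑ i ∈ s, u i) (∑ i ∈ s, v i)) (max (∑ i ∈ s, u i) (∑ i ∈ s, v i)),
      1 / 2 * min (p (∑ i ∈ s, u i) ^ 2 * √(weightAvg p a b (∑ i ∈ s, u i)) ^ 2)
          (p (∑ i ∈ s, v i) ^ 2 * √(weightAvg p a b (∑ i ∈ s, v i)) ^ 2) *
          ∑ i ∈ s, (√(v i) - √(u i)) ^ 2 +
        C₀ / 8 * σ ^ (a - 1) * (∑ i ∈ s, v i - ∑ i ∈ s, u i) ^ 2 / (1 - σ) ^ (1 + b + κ) ≤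
      ∑ i ∈ s, (p (∑ i ∈ s, u i) ^ 2 + p (∑ i ∈ s, v i) ^ 2) / 2 *
        (√(v i) * √(weightAvg p a b (∑ i ∈ s, v i)) -
          √(u i) * √(weightAvg p a b (∑ i ∈ s, u i))) ^ 2 := by
  set Mu := ∑ i ∈ s, u i
  set Mv := ∑ i ∈ s, v i
  have hsub : uIcc Mu Mv ⊆ Ioo 0 1 := fun M hM =>
    ⟨lt_of_lt_of_le (lt_min hMu.1 hMv.1) hM.1, lt_of_le_of_lt hM.2 (max_lt hMu.2 hMv.2)⟩
  obtain ⟨σ, hσ, hmvt⟩ := exists_mem_Ioo_min_max_sub_eq_mul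
    (f := fun M => √(weightAvg p a b M)) hne fun M hM =>
    (hasDerivAt_sqrt_weightAvg (by linarith) hpc hp (hsub hM)).differentiableAt.hasDerivAt
  obtain ⟨hσ0, hσ1⟩ : σ ∈ Ioo (0 : ℝ) 1 := hsub (Ioo_subset_Icc_self hσ)
  refine ⟨σ, hσ, ?_⟩
  set f' := deriv (fun M => √(weightAvg p a b M)) σ
  have hf' : 0 ≤ f' := deriv_sqrt_weightAvg_nonneg ha hb hpa hp hpc ⟨hσ0, hσ1⟩
  have hpσ : p σ ^ 2 ≤ p Mu ^ 2 + p Mv ^ 2 := by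
    have hpσ0 := hp σ ⟨hσ0.le, hσ1⟩
    rcases min_lt_iff.mp hσ.1 with h | h
    · nlinarith [hpa ⟨hMu.1.le, hMu.2⟩ ⟨hσ0.le, hσ1⟩ h.le]
    · nlinarith [hpa ⟨hMv.1.le, hMv.2⟩ ⟨hσ0.le, hσ1⟩ h.le]
  refine half_min_mul_sum_add_le_sum s hu hv (sqrt_nonneg _) (sqrt_nonneg _)
    (by rw [hmvt, mul_assoc]; exact mul_nonneg hf' (mul_self_nonneg _)) ?_
  have h1σ := sub_pos.mpr hσ1
  rw [hmvt]
  calc C₀ / 8 * σ ^ (a - 1) * (Mv - Mu) ^ 2 / (1 - σ) ^ (1 + b + κ)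
      = C₀ * σ ^ (a - 1) / (1 - σ) ^ (1 + b + κ) * (Mv - Mu) ^ 2 / 8 := by ring
    _ ≤ σ * p σ ^ 2 * f' ^ 2 * (Mv - Mu) ^ 2 / 8 := by gcongr; exact hC₀ σ ⟨hσ0, hσ1⟩
    _ = p σ ^ 2 / 2 * ((f' * (Mv - Mu) / 2) ^ 2 * σ) := by ring
    _ ≤ _ := by gcongr; exact hσ.2.le

end Weight

theorem entropy_production_lower_bound_general (a b : ℝ) (ha : 1 ≤ a) (hb : 1 ≤ b)
    (p p' : ℝ → ℝ)
    (hpa : AntitoneOn p (Icc 0 1))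
    (hppos : ∀ M ∈ Ico (0:ℝ) 1, 0 < p M)
    (hp' : ∀ M ∈ Ico (0:ℝ) 1, HasDerivWithinAt p (p' M) (Ico 0 1) M)
    (κ c : ℝ) (hκ : 0 < κ) (hc : 0 < c)
    (hlim : Filter.Tendsto (fun M => -((1 - M) ^ (1 + κ) * p' M / p M))
      (nhdsWithin 1 (Iio 1)) (nhds c)) :
    ∃ C₃ > (0:ℝ), ∀ (n : ℕ), 1 ≤ n → ∀ u v : Fin n → ℝ,
      (∀ i, 0 ≤ u i) → (∀ i, 0 ≤ v i) →
      (∑ i, u i) ∈ Ioo (0:ℝ) 1 → (∑ i, v i) ∈ Ioo (0:ℝ) 1 →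
      (∑ i, u i) ≠ (∑ i, v i) →
      ∃ Mσ ∈ Ioo (min (∑ i, u i) (∑ i, v i)) (max (∑ i, u i) (∑ i, v i)),
        (1/2 : ℝ) * min (p (∑ i, u i) * qfun p a b (∑ i, u i))
            (p (∑ i, v i) * qfun p a b (∑ i, v i)) *
            (∑ i, (Real.sqrt (v i) - Real.sqrt (u i)) ^ 2) +
          C₃ * Mσ ^ (a - 1) * ((∑ i, v i) - (∑ i, u i)) ^ 2 /
            (1 - Mσ) ^ (1 + b + κ) ≤
        ∑ i, (p (∑ i, u i) ^ 2 + p (∑ i, v i) ^ 2) / 2 *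
          (Real.sqrt (v i) * Real.sqrt (qfun p a b (∑ i, v i) / p (∑ i, v i)) -
            Real.sqrt (u i) * Real.sqrt (qfun p a b (∑ i, u i) / p (∑ i, u i))) ^ 2 := by
  have hb0 : 0 ≤ b := by linarith
  have hpa' : AntitoneOn p (Ico 0 1) := hpa.mono Ico_subset_Icc_self
  have hpc : ContinuousOn p (Ico 0 1) := fun M hM => (hp' M hM).continuousWithinAt
  have hderiv : ∀ M ∈ Ioo (0 : ℝ) 1, HasDerivAt p (p' M) M :=
    fun M hM => (hp' M ⟨hM.1.le, hM.2⟩).hasDerivAt (Ico_mem_nhds hM.1 hM.2)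
  obtain ⟨C₀, hC₀, hC₀le⟩ :=
    exists_pos_le_mul_sq_deriv_sqrt_weightAvg ha hb0 hpa' hppos hpc hderiv hκ hc hlim
  refine ⟨C₀ / 8, by positivity, fun n _ u v hu hv hMu hMv hne => ?_⟩
  rw [sqrt_qfun_div_eq (hppos _ ⟨hMu.1.le, hMu.2⟩).ne',
    sqrt_qfun_div_eq (hppos _ ⟨hMv.1.le, hMv.2⟩).ne',
    mul_qfun_eq (weightAvg_pos (by linarith) hpc hppos hMu).le,
    mul_qfun_eq (weightAvg_pos (by linarith) hpc hppos hMv).le]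
  exact exists_edge_lower_bound_weightAvg ha hb0 hpa' hppos hpc hC₀le Finset.univ
    (fun i _ => hu i) (fun i _ => hv i) hMu hMv hne

/-- Pointwise (per-edge) lower bound for the discrete entropy production:
there is `C₃ > 0` (depending only on `p, a, b, κ`) such that for all `n ≥ 1` and
nonnegative `u, v` with total masses `M_u ≠ M_v` in `(0,1)`, there is `M_σ`
strictly between `M_u` and `M_v` with
`Σᵢ p_σ² (√vᵢ f(M_v) − √uᵢ f(M_u))² ≥ ½ min{p(M_u)q(M_u), p(M_v)q(M_v)} Σᵢ (√vᵢ−√uᵢ)²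
  + C₃ M_σ^{a−1} (M_v−M_u)² / (1−M_σ)^{1+b+κ}`,
where `f(M) = √(q(M)/p(M))` and `p_σ² = (p(M_u)² + p(M_v)²)/2`. -/
theorem entropy_production_lower_bound (a b : ℝ) (ha : 1 ≤ a) (hb : 1 ≤ b)
    (p p' : ℝ → ℝ) (hpc : ContinuousOn p (Icc 0 1))
    (hpa : AntitoneOn p (Icc 0 1)) (hp1 : p 1 = 0)
    (hppos : ∀ M ∈ Ico (0:ℝ) 1, 0 < p M)
    (hp' : ∀ M ∈ Ico (0:ℝ) 1, HasDerivWithinAt p (p' M) (Ico 0 1) M)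
    (hp'c : ContinuousOn p' (Ico 0 1))
    (κ c : ℝ) (hκ : 0 < κ) (hc : 0 < c)
    (hlim : Filter.Tendsto (fun M => -((1 - M) ^ (1 + κ) * p' M / p M))
      (nhdsWithin 1 (Iio 1)) (nhds c)) :
    ∃ C₃ > (0:ℝ), ∀ (n : ℕ), 1 ≤ n → ∀ u v : Fin n → ℝ,
      (∀ i, 0 ≤ u i) → (∀ i, 0 ≤ v i) →
      (∑ i, u i) ∈ Ioo (0:ℝ) 1 → (∑ i, v i) ∈ Ioo (0:ℝ) 1 →
      (∑ i, u i) ≠ (∑ i, v i) →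
      ∃ Mσ ∈ Ioo (min (∑ i, u i) (∑ i, v i)) (max (∑ i, u i) (∑ i, v i)),
        (1/2 : ℝ) * min (p (∑ i, u i) * qfun p a b (∑ i, u i))
            (p (∑ i, v i) * qfun p a b (∑ i, v i)) *
            (∑ i, (Real.sqrt (v i) - Real.sqrt (u i)) ^ 2) +
          C₃ * Mσ ^ (a - 1) * ((∑ i, v i) - (∑ i, u i)) ^ 2 /
            (1 - Mσ) ^ (1 + b + κ) ≤
        ∑ i, (p (∑ i, u i) ^ 2 + p (∑ i, v i) ^ 2) / 2 *
          (Real.sqrt (v i) * Real.sqrt (qfun p a b (∑ i, v i) / p (∑ i, v i)) -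
            Real.sqrt (u i) * Real.sqrt (qfun p a b (∑ i, u i) / p (∑ i, u i))) ^ 2 :=
  entropy_production_lower_bound_general a b ha hb p p' hpa hppos hp' κ c hκ hc hlim
end
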